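/- arXiv:2008.00981 — 5 statements merged into one kernel-verified Lean document; each statement's English description precedes it below -/
import Mathlib

section
/- Let X be a nonempty set and let H be a reproducing kernel Hilbert space on X whose kernel K is non-vanishing (K(z,w) ≠ 0 for all z,w ∈ X). For a function φ: X → ℂ, one has ‖φ‖_{Mult(H),2} ≤ 1 if and only if either φ is constant of modulus at most 1, or φ maps X into the open unit disc 𝔻 and satisfies δ(φ(z),φ(w)) ≤ δ_H(z,w) for all z,w ∈ X, where δ(u,v) = |(u−v)/(1−v̄u)| is the pseudohyperbolic metric on 𝔻 and δ_H(z,w) = (1 − |K(z,w)|²/(K(z,z)K(w,w)))^{1/2}. -/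
open scoped ComplexConjugate ComplexOrder ENNReal NNReal

noncomputable section

/-- A reproducing kernel Hilbert space of complex-valued functions on `X`,
realized as an abstract Hilbert space `H` together with an injective linear
evaluation map into functions, kernel vectors and the reproducing property.
We include the standing assumption `K(x,x) ≠ 0`. -/
structure RKHSpace (X : Type*) (H : Type*) [NormedAddCommGroup H]
    [InnerProductSpace ℂ H] [CompleteSpace H] where
  eval : H →ₗ[ℂ] (X → ℂ)
  eval_injective : Function.Injective eval
  kvec : X → H
  reproducing : ∀ (f : H) (x : X), eval f x = (inner ℂ (kvec x) f : ℂ)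
  nondeg : ∀ x : X, eval (kvec x) x ≠ 0

/-- `L` is `n`-point positive if all `n × n` matrices sampled from it are
positive semidefinite. -/
def NPointPositive {X : Type*} (n : ℕ) (L : X → X → ℂ) : Prop :=
  ∀ v : Fin n → X, (Matrix.of fun i j : Fin n => L (v i) (v j)).PosSemidef

namespace RKHSpace

variable {X H : Type*} [NormedAddCommGroup H] [InnerProductSpace ℂ H] [CompleteSpace H]

/-- The reproducing kernel `K(z,w)`. -/
def ker (R : RKHSpace X H) (z w : X) : ℂ := R.eval (R.kvec w) z

/-- `φ` is a multiplier of the space. -/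
def IsMultiplier (R : RKHSpace X H) (φ : X → ℂ) : Prop :=
  ∀ f : H, ∃ g : H, R.eval g = fun x => φ x * R.eval f x

/-- The multiplier norm of `φ` (the operator norm of `M_φ`), `∞` if `φ` is
not a multiplier. -/
def multNorm (R : RKHSpace X H) (φ : X → ℂ) : ℝ≥0∞ :=
  ⨅ (C : ℝ≥0) (_ : R.IsMultiplier φ ∧ ∀ f g : H,
      R.eval g = (fun x => φ x * R.eval f x) → ‖g‖ ≤ (C : ℝ) * ‖f‖), (C : ℝ≥0∞)

/-- The `n`-point multiplier norm of `φ`. -/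
def nPointNorm (R : RKHSpace X H) (n : ℕ) (φ : X → ℂ) : ℝ≥0∞ :=
  ⨅ (C : ℝ≥0) (_ : NPointPositive n fun z w =>
      R.ker z w * (((C : ℝ) : ℂ) ^ 2 - φ z * conj (φ w))), (C : ℝ≥0∞)

end RKHSpace

end

noncomputable section

open RKHSpace

/-! Positivity of `K(z,w) (C² - φ(z) φ(w)̄)` on pairs of points only improves as `C` grows
(the difference is a positive multiple of `K`) and is a closed condition, so
`‖φ‖_{Mult,2} ≤ 1` says exactly that `K (1 - φ φ̄)` is 2-point positive. A Hermitian `2 × 2`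
matrix is positive semidefinite iff its trace and determinant are nonnegative, so this means
`|φ| ≤ 1` and `|K(z,w)|² |1 - φ(z) φ(w)̄|² ≤ K(z,z) K(w,w) (1 - |φ(z)|²) (1 - |φ(w)|²)`.
By `|1 - u v̄|² = |u - v|² + (1 - |u|²)(1 - |v|²)` this is `δ(φ(z), φ(w)) ≤ δ_H(z,w)` when `φ`
maps into the disc. If `|φ(x₀)| = 1` somewhere, the right side vanishes at `(z, x₀)`, and
`K(z, x₀) ≠ 0` forces `φ(z) φ(x₀)̄ = 1`, i.e. `φ(z) = φ(x₀)`. -/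

theorem Matrix.IsHermitian.posSemidef_iff_trace_nonneg_and_det_nonneg {𝕜 : Type*} [RCLike 𝕜]
    {A : Matrix (Fin 2) (Fin 2) 𝕜} (hA : A.IsHermitian) :
    A.PosSemidef ↔ 0 ≤ A.trace ∧ 0 ≤ A.det := by
  refine ⟨fun h => ⟨h.trace_nonneg, h.det_nonneg⟩, fun ⟨htr, hdet⟩ => ?_⟩
  rw [hA.trace_eq_sum_eigenvalues, Fin.sum_univ_two, ← RCLike.ofReal_add,
    RCLike.ofReal_nonneg] at htr
  rw [hA.det_eq_prod_eigenvalues, Fin.prod_univ_two, ← RCLike.ofReal_mul,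
    RCLike.ofReal_nonneg] at hdet
  rw [hA.posSemidef_iff_eigenvalues_nonneg, Pi.le_def, Fin.forall_fin_two, Pi.zero_apply,
    Pi.zero_apply]
  exact ⟨by nlinarith, by nlinarith⟩

theorem Matrix.isClosed_setOf_posSemidef {n 𝕜 : Type*} [Fintype n] [RCLike 𝕜] :
    IsClosed {A : Matrix n n 𝕜 | A.PosSemidef} := by
  simp only [Matrix.posSemidef_iff_dotProduct_mulVec, Set.ofPred_and, Set.ofPred_forall]
  refine .inter (isClosed_eq (by fun_prop) continuous_id) (isClosed_iInter fun x => ?_)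
  exact isClosed_le continuous_const
    (continuous_const.dotProduct (continuous_id.matrix_mulVec continuous_const))

namespace NPointPositive

variable {X : Type*} {n : ℕ} {L M : X → X → ℂ}

theorem add (hL : NPointPositive n L) (hM : NPointPositive n M) : NPointPositive n (L + M) :=
  fun v => (hL v).add (hM v)

theorem smul (hL : NPointPositive n L) {c : ℂ} (hc : 0 ≤ c) : NPointPositive n (c • L) :=
  fun v => (hL v).smul hc

end NPointPositive

section

variable {X : Type*} {n : ℕ} {L : X → X → ℂ}

theorem isClosed_setOf_nPointPositive : IsClosed {L : X → X → ℂ | NPointPositive n L} := by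
  simp only [NPointPositive, Set.ofPred_forall]
  exact isClosed_iInter fun v => Matrix.isClosed_setOf_posSemidef.preimage (by fun_prop)

theorem nPointPositive_two_iff (hL : ∀ z w, L w z = conj (L z w)) :
    NPointPositive 2 L ↔ ∀ z w, 0 ≤ (L z z).re ∧ ‖L z w‖ ^ 2 ≤ (L z z).re * (L w w).re := by
  have hdiag : ∀ z, L z z = ((L z z).re : ℂ) := fun z =>
    (Complex.conj_eq_iff_re.1 (hL z z).symm).symm
  have hpair : ∀ z w, (Matrix.of fun i j : Fin 2 => L (![z, w] i) (![z, w] j)).PosSemidef ↔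
      0 ≤ (L z z).re + (L w w).re ∧ ‖L z w‖ ^ 2 ≤ (L z z).re * (L w w).re := by
    intro z w
    rw [Matrix.IsHermitian.posSemidef_iff_trace_nonneg_and_det_nonneg
      (Matrix.IsHermitian.ext fun i j => by simp [hL (![z, w] i) (![z, w] j)]),
      Matrix.trace_fin_two, Matrix.det_fin_two]
    simp only [Matrix.of_apply, Matrix.cons_val_zero, Matrix.cons_val_one, hL z w,
      Complex.mul_conj']
    rw [hdiag z, hdiag w]
    norm_cast
    simp
  refine ⟨fun h z w => ⟨?_, ((hpair z w).1 (h _)).2⟩, fun h v => ?_⟩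
  · linarith [((hpair z z).1 (h _)).1]
  · have hv : v = ![v 0, v 1] := by ext i; fin_cases i <;> rfl
    rw [hv, hpair]
    exact ⟨add_nonneg (h (v 0) (v 0)).1 (h (v 1) (v 1)).1, (h _ _).2⟩

end

namespace Complex

theorem norm_one_sub_mul_conj_sq (u v : ℂ) :
    ‖1 - u * conj v‖ ^ 2 = ‖u - v‖ ^ 2 + (1 - ‖u‖ ^ 2) * (1 - ‖v‖ ^ 2) := by
  simp only [← normSq_eq_norm_sq, normSq_apply, sub_re, sub_im, one_re, one_im, mul_re, mul_im,
    conj_re, conj_im]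
  ring

theorem norm_sub_div_one_sub_conj_mul_le_sqrt_iff {u v : ℂ} (hu : ‖u‖ < 1) (hv : ‖v‖ < 1)
    {t : ℝ} (ht : t ≤ 1) :
    ‖(u - v) / (1 - conj v * u)‖ ≤ √(1 - t) ↔
      t * ‖1 - u * conj v‖ ^ 2 ≤ (1 - ‖u‖ ^ 2) * (1 - ‖v‖ ^ 2) := by
  have hdisc : 0 < (1 - ‖u‖ ^ 2) * (1 - ‖v‖ ^ 2) := by
    have := norm_nonneg u; have := norm_nonneg v
    exact mul_pos (by nlinarith) (by nlinarith)
  have hD : 0 < ‖1 - u * conj v‖ ^ 2 := by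
    rw [norm_one_sub_mul_conj_sq]; positivity
  rw [mul_comm (conj v), Real.le_sqrt (norm_nonneg _) (sub_nonneg.2 ht), norm_div, div_pow,
    div_le_iff₀ hD, norm_one_sub_mul_conj_sq]
  constructor <;> intro h <;> linarith

theorem eq_of_norm_eq_one_of_mul_norm_one_sub_mul_conj_sq_le {u v : ℂ} {t : ℝ} (ht : 0 < t)
    (hv : ‖v‖ = 1) (h : t * ‖1 - u * conj v‖ ^ 2 ≤ (1 - ‖u‖ ^ 2) * (1 - ‖v‖ ^ 2)) : u = v := by
  have hnorm : ‖1 - u * conj v‖ ^ 2 ≤ 0 :=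
    nonpos_of_mul_nonpos_right (by simpa [hv] using h) ht
  have huv : u * conj v = 1 :=
    (sub_eq_zero.1 (norm_eq_zero.1 (pow_eq_zero_iff two_ne_zero |>.1
      (le_antisymm hnorm (sq_nonneg _))))).symm
  calc u = u * (conj v * v) := by rw [conj_mul', hv]; simp
    _ = v := by rw [← mul_assoc, huv, one_mul]

theorem mul_norm_one_sub_mul_conj_self_sq_le (c : ℂ) {t : ℝ} (ht : t ≤ 1) :
    t * ‖1 - c * conj c‖ ^ 2 ≤ (1 - ‖c‖ ^ 2) * (1 - ‖c‖ ^ 2) := by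
  rw [mul_conj', ← ofReal_pow, ← ofReal_one, ← ofReal_sub, norm_real, Real.norm_eq_abs, sq_abs,
    ← sq]
  exact mul_le_of_le_one_left (sq_nonneg _) ht

end Complex

namespace RKHSpace

variable {X H : Type*} [NormedAddCommGroup H] [InnerProductSpace ℂ H] [CompleteSpace H]
  (R : RKHSpace X H)

theorem ker_eq_inner (z w : X) : R.ker z w = inner ℂ (R.kvec z) (R.kvec w) :=
  R.reproducing _ _

theorem ker_swap (z w : X) : R.ker w z = conj (R.ker z w) := by
  rw [ker_eq_inner, ker_eq_inner, inner_conj_symm]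

theorem re_ker_self_pos (z : X) : 0 < (R.ker z z).re := by
  have hk : R.kvec z ≠ 0 := fun h => R.nondeg z (by simp [h])
  rw [ker_eq_inner, inner_self_eq_norm_sq_to_K]
  norm_cast
  exact pow_pos (norm_pos_iff.2 hk) 2

theorem nPointPositive_ker (n : ℕ) : NPointPositive n R.ker := fun v => by
  simpa only [Matrix.gram, Function.comp_apply, ← ker_eq_inner] using
    Matrix.posSemidef_gram ℂ (R.kvec ∘ v)

theorem norm_ker_sq_le (z w : X) : ‖R.ker z w‖ ^ 2 ≤ (R.ker z z).re * (R.ker w w).re :=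
  ((nPointPositive_two_iff R.ker_swap).1 (R.nPointPositive_ker 2) z w).2

/-- In the paper's notation, `δ_H(z,w) = √(1 - normalizedKerSq z w)`. -/
def normalizedKerSq (z w : X) : ℝ := ‖R.ker z w‖ ^ 2 / ((R.ker z z).re * (R.ker w w).re)

theorem normalizedKerSq_le_one (z w : X) : R.normalizedKerSq z w ≤ 1 :=
  div_le_one_of_le₀ (R.norm_ker_sq_le z w)
    (mul_pos (R.re_ker_self_pos z) (R.re_ker_self_pos w)).le

theorem normalizedKerSq_pos {z w : X} (h : R.ker z w ≠ 0) : 0 < R.normalizedKerSq z w :=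
  div_pos (by positivity) (mul_pos (R.re_ker_self_pos z) (R.re_ker_self_pos w))

def multKernel (φ : X → ℂ) (C : ℝ) (z w : X) : ℂ :=
  R.ker z w * ((C : ℂ) ^ 2 - φ z * conj (φ w))

variable (φ : X → ℂ)

theorem multKernel_swap (C : ℝ) (z w : X) :
    R.multKernel φ C w z = conj (R.multKernel φ C z w) := by
  simp only [multKernel, R.ker_swap z w, map_mul, map_sub, map_pow, Complex.conj_ofReal,
    Complex.conj_conj]
  ring

theorem multKernel_eq_add_smul_ker (C C' : ℝ) :
    R.multKernel φ C' = R.multKernel φ C + ((C' ^ 2 - C ^ 2 : ℝ) : ℂ) • R.ker := by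
  ext z w
  simp only [multKernel, Pi.add_apply, Pi.smul_apply, smul_eq_mul]
  push_cast
  ring

theorem continuous_multKernel : Continuous (R.multKernel φ) := by
  unfold multKernel
  fun_prop

theorem re_multKernel_one_self (z : X) :
    (R.multKernel φ 1 z z).re = (R.ker z z).re * (1 - ‖φ z‖ ^ 2) := by
  have hreal : R.ker z z = ((R.ker z z).re : ℂ) :=
    (Complex.conj_eq_iff_re.1 (R.ker_swap z z).symm).symm
  rw [multKernel, hreal, Complex.mul_conj', Complex.ofReal_one, one_pow]
  norm_cast

theorem norm_multKernel_one (z w : X) :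
    ‖R.multKernel φ 1 z w‖ = ‖R.ker z w‖ * ‖1 - φ z * conj (φ w)‖ := by
  rw [multKernel, norm_mul, Complex.ofReal_one, one_pow]

variable {R φ}

theorem nPointPositive_multKernel_of_sq_le {n : ℕ} {C C' : ℝ}
    (h : NPointPositive n (R.multKernel φ C)) (hC : C ^ 2 ≤ C' ^ 2) :
    NPointPositive n (R.multKernel φ C') := by
  rw [R.multKernel_eq_add_smul_ker φ C C']
  exact h.add ((R.nPointPositive_ker n).smul (Complex.zero_le_real.2 (sub_nonneg.2 hC)))

theorem nPointNorm_le_one_iff {n : ℕ} :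
    R.nPointNorm n φ ≤ 1 ↔ NPointPositive n (R.multKernel φ 1) := by
  refine ⟨fun h => ?_, fun h => (iInf₂_le 1 h).trans (by simp)⟩
  have hlevel : ∀ C : ℝ, 1 < C → NPointPositive n (R.multKernel φ C) := by
    intro C hC
    have hlt : R.nPointNorm n φ < (C.toNNReal : ℝ≥0∞) := h.trans_lt (by simpa using hC)
    obtain ⟨C₀, hC₀⟩ := iInf_lt_iff.1 hlt
    obtain ⟨hP, hC₀C⟩ := iInf_lt_iff.1 hC₀
    have hC₀C : (C₀ : ℝ) ≤ C := by
      have := ENNReal.coe_lt_coe.1 hC₀C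
      exact (Real.le_toNNReal_iff_coe_le (by linarith)).1 this.le
    exact nPointPositive_multKernel_of_sq_le hP (pow_le_pow_left₀ C₀.coe_nonneg hC₀C 2)
  exact isClosed_setOf_nPointPositive.mem_of_tendsto
    ((R.continuous_multKernel φ).tendsto 1 |>.mono_left nhdsWithin_le_nhds)
    (eventually_nhdsWithin_of_forall (s := Set.Ioi 1) hlevel)

theorem nPointNorm_two_le_one_iff :
    R.nPointNorm 2 φ ≤ 1 ↔ ∀ z w, ‖φ z‖ ≤ 1 ∧
      R.normalizedKerSq z w * ‖1 - φ z * conj (φ w)‖ ^ 2 ≤ (1 - ‖φ z‖ ^ 2) * (1 - ‖φ w‖ ^ 2) := by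
  rw [nPointNorm_le_one_iff, nPointPositive_two_iff (R.multKernel_swap φ 1)]
  refine forall₂_congr fun z w => ?_
  have hz := R.re_ker_self_pos z
  rw [re_multKernel_one_self, re_multKernel_one_self, norm_multKernel_one,
    mul_nonneg_iff_of_pos_left hz, sub_nonneg, sq_le_one_iff₀ (norm_nonneg _), normalizedKerSq,
    div_mul_eq_mul_div, div_le_iff₀ (mul_pos hz (R.re_ker_self_pos w)), mul_pow]
  exact and_congr_right' (by ring_nf)

end RKHSpace

theorem twoPointNorm_le_one_iff_general
    {X H : Type*} [NormedAddCommGroup H] [InnerProductSpace ℂ H]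
    [CompleteSpace H] (R : RKHSpace X H) (hK : ∀ z w : X, R.ker z w ≠ 0)
    (φ : X → ℂ) :
    R.nPointNorm 2 φ ≤ 1 ↔
      ((∃ c : ℂ, ‖c‖ ≤ 1 ∧ φ = fun _ => c) ∨
        ((∀ x : X, ‖φ x‖ < 1) ∧
          ∀ z w : X,
            ‖(φ z - φ w) / (1 - conj (φ w) * φ z)‖ ≤
              Real.sqrt (1 - ‖R.ker z w‖ ^ 2 /
                ((R.ker z z).re * (R.ker w w).re)))) := by
  rw [nPointNorm_two_le_one_iff]
  constructor
  · intro h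
    by_cases hdisc : ∀ x, ‖φ x‖ < 1
    · exact .inr ⟨hdisc, fun z w => (Complex.norm_sub_div_one_sub_conj_mul_le_sqrt_iff (hdisc z)
        (hdisc w) (R.normalizedKerSq_le_one z w)).2 (h z w).2⟩
    · obtain ⟨x₀, hx₀⟩ := not_forall.1 hdisc
      have hunit : ‖φ x₀‖ = 1 := le_antisymm (h x₀ x₀).1 (not_lt.1 hx₀)
      refine .inl ⟨φ x₀, hunit.le, funext fun z => ?_⟩
      exact Complex.eq_of_norm_eq_one_of_mul_norm_one_sub_mul_conj_sq_le
        (R.normalizedKerSq_pos (hK z x₀)) hunit (h z x₀).2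
  · rintro (⟨c, hc, rfl⟩ | ⟨hdisc, hδ⟩) z w
    · exact ⟨hc, Complex.mul_norm_one_sub_mul_conj_self_sq_le c (R.normalizedKerSq_le_one z w)⟩
    · exact ⟨(hdisc z).le, (Complex.norm_sub_div_one_sub_conj_mul_le_sqrt_iff (hdisc z) (hdisc w)
        (R.normalizedKerSq_le_one z w)).1 (hδ z w)⟩

/-- characterization of the two-point multiplier norm being at most one
in terms of the pseudohyperbolic metric. -/
theorem twoPointNorm_le_one_iff
    {X H : Type*} [Nonempty X] [NormedAddCommGroup H] [InnerProductSpace ℂ H]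
    [CompleteSpace H] (R : RKHSpace X H) (hK : ∀ z w : X, R.ker z w ≠ 0)
    (φ : X → ℂ) :
    R.nPointNorm 2 φ ≤ 1 ↔
      ((∃ c : ℂ, ‖c‖ ≤ 1 ∧ φ = fun _ => c) ∨
        ((∀ x : X, ‖φ x‖ < 1) ∧
          ∀ z w : X,
            ‖(φ z - φ w) / (1 - conj (φ w) * φ z)‖ ≤
              Real.sqrt (1 - ‖R.ker z w‖ ^ 2 /
                ((R.ker z z).re * (R.ker w w).re)))) :=
  twoPointNorm_le_one_iff_general R hK φ

end
end

section
/- Let H be a reproducing kernel Hilbert space of analytic functions on an open domain Ω ⊂ ℂ^d. Then every function φ: Ω → ℂ with ‖φ‖_{Mult(H),3} < ∞ is analytic on Ω. (This generalizes Hindmarsh's theorem, which is the case of the Hardy space H² on 𝔻.) -/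
open scoped ComplexConjugate ComplexOrder ENNReal NNReal

noncomputable section

/-- A reproducing kernel Hilbert space of complex-valued functions on `X`,
realized as an abstract Hilbert space `H` together with an injective linear
evaluation map into functions, kernel vectors and the reproducing property.
We include the standing assumption `K(x,x) ≠ 0`. -/
structure RKHS' (X : Type*) (H : Type*) [NormedAddCommGroup H]
    [InnerProductSpace ℂ H] [CompleteSpace H] where
  eval : H →ₗ[ℂ] (X → ℂ)
  eval_injective : Function.Injective eval
  kvec : X → H
  reproducing : ∀ (f : H) (x : X), eval f x = (inner ℂ (kvec x) f : ℂ)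
  nondeg : ∀ x : X, eval (kvec x) x ≠ 0

namespace RKHS'

variable {X H : Type*} [NormedAddCommGroup H] [InnerProductSpace ℂ H] [CompleteSpace H]

/-- The reproducing kernel `K(z,w)`. -/
def ker (R : RKHS' X H) (z w : X) : ℂ := R.eval (R.kvec w) z

/-- `φ` is a multiplier of the space. -/
def IsMultiplier (R : RKHS' X H) (φ : X → ℂ) : Prop :=
  ∀ f : H, ∃ g : H, R.eval g = fun x => φ x * R.eval f x

/-- The multiplier norm of `φ` (the operator norm of `M_φ`), `∞` if `φ` is
not a multiplier. -/
def multNorm (R : RKHS' X H) (φ : X → ℂ) : ℝ≥0∞ :=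
  ⨅ (C : ℝ≥0) (_ : R.IsMultiplier φ ∧ ∀ f g : H,
      R.eval g = (fun x => φ x * R.eval f x) → ‖g‖ ≤ (C : ℝ) * ‖f‖), (C : ℝ≥0∞)

/-- The `n`-point multiplier norm of `φ`. -/
def nPointNorm (R : RKHS' X H) (n : ℕ) (φ : X → ℂ) : ℝ≥0∞ :=
  ⨅ (C : ℝ≥0) (_ : NPointPositive n fun z w =>
      R.ker z w * (((C : ℝ) : ℂ) ^ 2 - φ z * conj (φ w))), (C : ℝ≥0∞)

end RKHS'

end

noncomputable section

open RKHS'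

/-- Extension of a function on a subset to the ambient space (by junk values). -/
def extFn {E : Type*} (Ω : Set E) (φ : ↥Ω → ℂ) : E → ℂ :=
  Function.extend Subtype.val φ fun _ => 0

/-!
Three-point positivity of `K(z,w) (C² - φ(z) conj φ(w))` says that multiplying a functional
`f ↦ ∑ cᵢ f(zᵢ)` supported on three points by the values of `φ` increases its norm at most by the
factor `C`. On three collinear points such a functional is a second divided difference, which is
bounded on the unit ball of `H` locally uniformly (maximum modulus and Banach–Steinhaus). Hence
`g = φ · K(·, x)` has locally bounded second divided differences along all complex lines. This
makes `g` differentiable along lines with a quadratic remainder that is uniform in the direction,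
and the midpoint case of the same bound makes the line derivative additive, so `g` is complex
differentiable at `x`. As `K(x, x) ≠ 0`, `φ = g / K(·, x)` near `x`.
-/

open Metric Set Filter Topology Asymptotics
open scoped InnerProductSpace

theorem isLittleO_id_of_norm_le_sq {E F : Type*} [SeminormedAddCommGroup E]
    [SeminormedAddCommGroup F] {f : E → F} {r β : ℝ} (hr : 0 < r)
    (h : ∀ v ∈ ball (0 : E) r, ‖f v‖ ≤ β * ‖v‖ ^ 2) : f =o[𝓝 0] fun v => v := by
  refine (IsBigO.of_bound β ?_).trans_isLittleO (isLittleO_norm_pow_id one_lt_two)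
  filter_upwards [ball_mem_nhds 0 hr] with v hv
  simpa using h v hv

theorem norm_dslope_le_of_norm_le {F : ℂ → ℂ} {z₀ w : ℂ} {r s N : ℝ}
    (hF : DifferentiableOn ℂ F (closedBall z₀ r)) (hN : ∀ z ∈ closedBall z₀ r, ‖F z‖ ≤ N)
    (hw : w ∈ closedBall z₀ s) (hsr : s < r) :
    ∀ z ∈ closedBall z₀ r, ‖dslope F w z‖ ≤ 2 * N / (r - s) := by
  have hwr : w ∈ ball z₀ r := mem_ball.2 (lt_of_le_of_lt hw hsr)
  have hr : r ≠ 0 := (pos_of_mem_ball hwr).ne'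
  have hd := (Complex.differentiableOn_dslope (closedBall_mem_nhds_of_mem hwr)).2 hF
  intro z hz
  refine Complex.norm_le_of_forall_mem_frontier_norm_le isBounded_ball
    (hd.diffContOnCl_ball subset_rfl) (fun y hy => ?_) (by rwa [closure_ball z₀ hr])
  rw [frontier_ball z₀ hr] at hy
  have hyw : r - s ≤ ‖y - w‖ := by
    rw [← dist_eq_norm]
    linarith [dist_triangle y w z₀, mem_sphere.1 hy, mem_closedBall.1 hw]
  have hy_ne : y ≠ w := by
    rintro rfl
    rw [sub_self, norm_zero] at hyw
    linarith
  rw [dslope_of_ne _ hy_ne, slope_def_field, norm_div]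
  have hFy := hN y (sphere_subset_closedBall hy)
  have hFw := hN w (ball_subset_closedBall hwr)
  calc ‖F y - F w‖ / ‖y - w‖ ≤ (N + N) / (r - s) :=
        div_le_div₀ (by linarith [norm_nonneg (F w)]) (norm_sub_le_of_le hFy hFw)
          (sub_pos.2 hsr) hyw
    _ = 2 * N / (r - s) := by ring

theorem norm_sub_mul_sub_sub_mul_le {F : ℂ → ℂ} {r s N : ℝ}
    (hF : DifferentiableOn ℂ F (closedBall 0 r)) (hN : ∀ z ∈ closedBall 0 r, ‖F z‖ ≤ N)
    {a b : ℂ} (ha : a ∈ closedBall 0 s) (hb : b ∈ closedBall 0 s) (hsr : s < r) :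
    ‖(F a - F 0) * b - (F b - F 0) * a‖ ≤ 4 * N / (r - s) ^ 2 * (‖a‖ * ‖b‖ * ‖a - b‖) := by
  have h0 : (0 : ℂ) ∈ closedBall 0 s := mem_closedBall_self (nonneg_of_mem_closedBall ha)
  have hr : 0 < r := lt_of_le_of_lt (nonneg_of_mem_closedBall ha) hsr
  set G := dslope F 0
  have hG := (Complex.differentiableOn_dslope (closedBall_mem_nhds 0 hr)).2 hF
  have hGN := norm_dslope_le_of_norm_le hF hN h0 hsr
  have key : (F a - F 0) * b - (F b - F 0) * a = a * b * (a - b) * dslope G b a := by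
    have ea := sub_smul_dslope F 0 a
    have eb := sub_smul_dslope F 0 b
    have eab := sub_smul_dslope G b a
    simp only [smul_eq_mul, sub_zero] at ea eb eab
    linear_combination (-b) * ea + a * eb - a * b * eab
  have hGba := norm_dslope_le_of_norm_le hG hGN hb hsr a (closedBall_subset_closedBall hsr.le ha)
  rw [key, norm_mul, norm_mul, norm_mul]
  calc ‖a‖ * ‖b‖ * ‖a - b‖ * ‖dslope G b a‖
      ≤ ‖a‖ * ‖b‖ * ‖a - b‖ * (2 * (2 * N / (r - s)) / (r - s)) := by gcongr
    _ = 4 * N / (r - s) ^ 2 * (‖a‖ * ‖b‖ * ‖a - b‖) := by field_simp; ring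

section SecondDifferences

variable {E : Type*} [NormedAddCommGroup E] [NormedSpace ℂ E]

/-- `a * b * (a - b)` times the second divided difference of `τ ↦ g (p + τ • u)` at `0, a, b`. -/
def lineSecondDiff (g : E → ℂ) (p u : E) (a b : ℂ) : ℂ :=
  (g (p + a • u) - g p) * b - (g (p + b • u) - g p) * a

def LineSecondDiffBoundedOn (g : E → ℂ) (U : Set E) (M : ℝ) : Prop :=
  ∀ p u a b, p ∈ U → p + a • u ∈ U → p + b • u ∈ U →
    ‖lineSecondDiff g p u a b‖ ≤ M * ‖u‖ ^ 2 * (‖a‖ * ‖b‖ * ‖a - b‖)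

theorem lineSecondDiffBoundedOn_of_differentiableOn {F : E → ℂ} {x : E} {r N : ℝ}
    (hF : DifferentiableOn ℂ F (closedBall x (4 * r)))
    (hN : ∀ y ∈ closedBall x (4 * r), ‖F y‖ ≤ N) :
    LineSecondDiffBoundedOn F (ball x r) (4 * N / r ^ 2) := by
  intro p u a b hp ha hb
  rcases eq_or_ne u 0 with rfl | hu
  · simp [lineSecondDiff]
  have hu' : 0 < ‖u‖ := norm_pos_iff.2 hu
  have hr : 0 < r := pos_of_mem_ball hp
  rw [mem_ball_iff_norm] at hp ha hb
  have hline :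
      MapsTo (fun τ : ℂ => p + τ • u) (closedBall 0 (3 * r / ‖u‖)) (closedBall x (4 * r)) := by
    intro τ hτ
    rw [mem_closedBall_zero_iff, le_div_iff₀ hu'] at hτ
    rw [mem_closedBall_iff_norm, add_sub_right_comm]
    calc ‖p - x + τ • u‖ ≤ ‖p - x‖ + ‖τ‖ * ‖u‖ := (norm_add_le _ _).trans_eq (by rw [norm_smul])
      _ ≤ 4 * r := by linarith
  have hsmall : ∀ τ : ℂ, ‖p + τ • u - x‖ < r → τ ∈ closedBall 0 (2 * r / ‖u‖) := by
    intro τ hτ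
    rw [mem_closedBall_zero_iff, le_div_iff₀ hu', ← norm_smul]
    calc ‖τ • u‖ = ‖(p + τ • u - x) - (p - x)‖ := by congr 1; abel
      _ ≤ 2 * r := by linarith [norm_sub_le (p + τ • u - x) (p - x)]
  have h := norm_sub_mul_sub_sub_mul_le
    (hF.comp ((differentiable_id.smul_const u).const_add p).differentiableOn hline)
    (fun τ hτ => hN _ (hline hτ)) (hsmall a ha) (hsmall b hb)
    (div_lt_div_of_pos_right (by linarith) hu')
  simp only [Function.comp_apply, zero_smul, add_zero] at h
  refine h.trans_eq ?_
  rw [← sub_div, show 3 * r - 2 * r = r by ring, div_pow, div_div_eq_mul_div]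
  ring

theorem exists_norm_sub_sub_mul_le_of_lineSecondDiff {g : E → ℂ} {p u : E} {δ β : ℝ}
    (hδ : 0 < δ)
    (h : ∀ s ∈ ball (0 : ℂ) δ, ∀ t ∈ ball (0 : ℂ) δ,
      ‖lineSecondDiff g p u s t‖ ≤ β * (‖s‖ * ‖t‖ * ‖s - t‖)) :
    ∃ L : ℂ, ∀ s ∈ ball (0 : ℂ) δ, ‖g (p + s • u) - g p - L * s‖ ≤ β * ‖s‖ ^ 2 := by
  set D : ℂ → ℂ := fun s => (g (p + s • u) - g p) / s
  have hD : ∀ s ∈ ball (0 : ℂ) δ \ {0}, ∀ t ∈ ball (0 : ℂ) δ \ {0}, ‖D s - D t‖ ≤ β * ‖s - t‖ := by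
    rintro s ⟨hs, hs0 : s ≠ 0⟩ t ⟨ht, ht0 : t ≠ 0⟩
    have hst : 0 < ‖s‖ * ‖t‖ := mul_pos (norm_pos_iff.2 hs0) (norm_pos_iff.2 ht0)
    have e : lineSecondDiff g p u s t = s * t * (D s - D t) := by
      simp only [lineSecondDiff, D]; field_simp
    have := h s hs t ht
    rw [e, norm_mul, norm_mul] at this
    nlinarith
  -- `D` is Lipschitz on the punctured disc, so it has a limit at `0`.
  obtain ⟨L, hL⟩ : ∃ L, Tendsto D (𝓝[≠] 0) (𝓝 L) := by
    refine cauchy_map_iff_exists_tendsto.1 (Metric.cauchy_iff.2 ⟨inferInstance, fun ε hε => ?_⟩)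
    obtain ⟨c, hc, hcε⟩ := exists_pos_mul_lt hε (2 * |β|)
    set η := min δ c
    have hη : 0 < η := lt_min hδ hc
    refine ⟨D '' (ball 0 η \ {0}),
      image_mem_map (sdiff_mem_nhdsWithin_compl (ball_mem_nhds 0 hη) _), ?_⟩
    rintro _ ⟨s, hs, rfl⟩ _ ⟨t, ht, rfl⟩
    have hsub : ball (0 : ℂ) η \ {0} ⊆ ball 0 δ \ {0} :=
      sdiff_subset_sdiff_left (ball_subset_ball (min_le_left _ _))
    have hst : ‖s - t‖ ≤ 2 * c := by
      linarith [norm_sub_le s t, mem_ball_zero_iff.1 hs.1, mem_ball_zero_iff.1 ht.1,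
        min_le_right δ c]
    rw [dist_eq_norm]
    calc ‖D s - D t‖ ≤ β * ‖s - t‖ := hD s (hsub hs) t (hsub ht)
      _ ≤ |β| * (2 * c) := by gcongr; exact le_abs_self β
      _ < ε := by linarith
  refine ⟨L, fun s hs => ?_⟩
  rcases eq_or_ne s 0 with rfl | hs0
  · simp
  have hDs : ‖D s - L‖ ≤ β * ‖s‖ := by
    have hlim : Tendsto (fun t => β * ‖s - t‖) (𝓝[≠] 0) (𝓝 (β * ‖s‖)) :=
      (((continuous_const.sub continuous_id).norm.const_mul β).tendsto' 0 _
        (by simp)).mono_left nhdsWithin_le_nhds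
    refine le_of_tendsto_of_tendsto (tendsto_const_nhds.sub hL).norm hlim ?_
    filter_upwards [sdiff_mem_nhdsWithin_compl (ball_mem_nhds (0 : ℂ) hδ) {0}] with t ht
    exact hD s ⟨hs, hs0⟩ t ht
  have e : g (p + s • u) - g p - L * s = s * (D s - L) := by
    simp only [D]; field_simp
  rw [e, norm_mul, sq]
  nlinarith [norm_nonneg s]

theorem exists_norm_sub_sub_mul_le_of_lineSecondDiffBoundedOn {g : E → ℂ} {x : E} {r M : ℝ}
    (hr : 0 < r) (hg : LineSecondDiffBoundedOn g (ball x r) M) (h : E) :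
    ∃ L : ℂ, ∀ s : ℂ, ‖s • h‖ < r → ‖g (x + s • h) - g x - L * s‖ ≤ M * ‖s • h‖ ^ 2 := by
  rcases eq_or_ne h 0 with rfl | hh
  · exact ⟨0, fun s _ => by simp⟩
  have hh' : 0 < ‖h‖ := norm_pos_iff.2 hh
  have hmem : ∀ s ∈ ball (0 : ℂ) (r / ‖h‖), x + s • h ∈ ball x r := fun s hs => by
    rw [mem_ball_zero_iff, lt_div_iff₀ hh'] at hs
    rwa [mem_ball_iff_norm, add_sub_cancel_left, norm_smul]
  obtain ⟨L, hL⟩ := exists_norm_sub_sub_mul_le_of_lineSecondDiff (div_pos hr hh')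
    (β := M * ‖h‖ ^ 2) fun s hs t ht => hg x h s t (mem_ball_self hr) (hmem s hs) (hmem t ht)
  refine ⟨L, fun s hs => (hL s ?_).trans_eq (by rw [norm_smul]; ring)⟩
  rwa [mem_ball_zero_iff, lt_div_iff₀ hh', ← norm_smul]

theorem hasDerivAt_zero_of_lineSecondDiffBoundedOn {g : E → ℂ} {x : E} {r M : ℝ} (hr : 0 < r)
    (hg : LineSecondDiffBoundedOn g (ball x r) M) (m v : E) :
    HasDerivAt (fun s : ℂ => g (x + s • (m + v)) + g (x + s • (m - v)) - 2 * g (x + s • m))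
      0 0 := by
  rw [hasDerivAt_iff_isLittleO_nhds_zero]
  refine isLittleO_id_of_norm_le_sq (r := r / (‖m‖ + ‖v‖ + 1)) (β := 2 * M * ‖v‖ ^ 2)
    (by positivity) fun s hs => ?_
  rw [mem_ball_zero_iff, lt_div_iff₀ (by positivity)] at hs
  have hmem : ∀ w : E, ‖w‖ ≤ ‖m‖ + ‖v‖ → x + s • w ∈ ball x r := fun w hw => by
    rw [mem_ball_iff_norm, add_sub_cancel_left, norm_smul]
    nlinarith [norm_nonneg s]
  have e₁ : x + s • m + (1 : ℂ) • s • v = x + s • (m + v) := by module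
  have e₂ : x + s • m + (-1 : ℂ) • s • v = x + s • (m - v) := by module
  have key := hg (x + s • m) (s • v) 1 (-1) (hmem m (by linarith [norm_nonneg v]))
    (e₁ ▸ hmem _ (norm_add_le m v)) (e₂ ▸ hmem _ (norm_sub_le m v))
  rw [lineSecondDiff, e₁, e₂] at key
  simp only [zero_add, zero_smul, add_zero, smul_zero, sub_zero]
  calc ‖g (x + s • (m + v)) + g (x + s • (m - v)) - 2 * g (x + s • m) - (g x + g x - 2 * g x)‖
      = ‖(g (x + s • (m + v)) - g (x + s • m)) * -1
          - (g (x + s • (m - v)) - g (x + s • m)) * 1‖ := by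
        rw [← norm_neg]; congr 1; ring
    _ ≤ M * ‖s • v‖ ^ 2 * (‖(1 : ℂ)‖ * ‖(-1 : ℂ)‖ * ‖(1 : ℂ) - -1‖) := key
    _ = 2 * M * ‖v‖ ^ 2 * ‖s‖ ^ 2 := by rw [norm_smul]; norm_num; ring

theorem differentiableAt_of_lineSecondDiffBoundedOn [FiniteDimensional ℂ E] {g : E → ℂ} {x : E}
    {r M : ℝ} (hr : 0 < r) (hg : LineSecondDiffBoundedOn g (ball x r) M) :
    DifferentiableAt ℂ g x := by
  choose A hA using exists_norm_sub_sub_mul_le_of_lineSecondDiffBoundedOn hr hg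
  have hA_deriv : ∀ h, HasDerivAt (fun s : ℂ => g (x + s • h)) (A h) 0 := by
    intro h
    rw [hasDerivAt_iff_isLittleO_nhds_zero]
    refine isLittleO_id_of_norm_le_sq (r := r / (‖h‖ + 1)) (β := M * ‖h‖ ^ 2) (by positivity)
      fun s hs => ?_
    rw [mem_ball_zero_iff, lt_div_iff₀ (by positivity)] at hs
    have hs' : ‖s • h‖ < r := by rw [norm_smul]; nlinarith [norm_nonneg s]
    simp only [zero_add, zero_smul, add_zero, smul_eq_mul, mul_comm s]
    calc _ ≤ M * ‖s • h‖ ^ 2 := hA h s hs'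
      _ = M * ‖h‖ ^ 2 * ‖s‖ ^ 2 := by rw [norm_smul]; ring
  have hA_smul : ∀ (μ : ℂ) h, A (μ • h) = μ * A h := by
    intro μ h
    have hcomp := HasDerivAt.comp (0 : ℂ) (by simpa using hA_deriv h) (hasDerivAt_mul_const μ)
    simp only [Function.comp_def, mul_smul] at hcomp
    exact ((hA_deriv (μ • h)).unique hcomp).trans (mul_comm _ _)
  have hA_add : ∀ h₁ h₂, A (h₁ + h₂) = A h₁ + A h₂ := by
    intro h₁ h₂
    set m : E := (2 : ℂ)⁻¹ • (h₁ + h₂)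
    set v : E := (2 : ℂ)⁻¹ • (h₁ - h₂)
    have hmid := (((hA_deriv (m + v)).add (hA_deriv (m - v))).sub
      ((hA_deriv m).const_mul 2)).unique (hasDerivAt_zero_of_lineSecondDiffBoundedOn hr hg m v)
    rw [show m + v = h₁ by module, show m - v = h₂ by module] at hmid
    rw [show h₁ + h₂ = (2 : ℂ) • m by module, hA_smul]
    linear_combination -hmid
  let A' : E →L[ℂ] ℂ :=
    LinearMap.toContinuousLinearMap { toFun := A, map_add' := hA_add, map_smul' := hA_smul }
  have hA' : HasFDerivAt g A' x := hasFDerivAt_iff_isLittleO_nhds_zero.2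
    (isLittleO_id_of_norm_le_sq hr (β := M) fun h hh =>
      show ‖g (x + h) - g x - A h‖ ≤ M * ‖h‖ ^ 2 by simpa using hA h 1 (by simpa using hh))
  exact hA'.differentiableAt

end SecondDifferences

namespace RKHS'

variable {X H : Type*} [NormedAddCommGroup H] [InnerProductSpace ℂ H] [CompleteSpace H]
  (R : RKHS' X H)

theorem ker_eq_inner (z w : X) : R.ker z w = ⟪R.kvec z, R.kvec w⟫_ℂ := R.reproducing _ _

theorem exists_nPointPositive_of_nPointNorm_lt_top {n : ℕ} {φ : X → ℂ}
    (h : R.nPointNorm n φ < ⊤) :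
    ∃ C : ℝ≥0, NPointPositive n fun z w => R.ker z w * (((C : ℝ) : ℂ) ^ 2 - φ z * conj (φ w)) := by
  by_contra! hC
  exact h.ne (by simp [nPointNorm, hC])

variable {R} {n : ℕ} {φ : X → ℂ} {C : ℝ≥0}

theorem norm_sum_smul_conj_smul_kvec_le
    (hC : NPointPositive n fun z w => R.ker z w * (((C : ℝ) : ℂ) ^ 2 - φ z * conj (φ w)))
    (z : Fin n → X) (c : Fin n → ℂ) :
    ‖∑ i, c i • conj (φ (z i)) • R.kvec (z i)‖ ≤ C * ‖∑ i, c i • R.kvec (z i)‖ := by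
  have hM :
      (Matrix.of fun i j => R.ker (z i) (z j) * (((C : ℝ) : ℂ) ^ 2 - φ (z i) * conj (φ (z j))))
      = ((C : ℝ) : ℂ) ^ 2 • Matrix.gram ℂ (R.kvec ∘ z)
        - Matrix.gram ℂ fun i => conj (φ (z i)) • R.kvec (z i) := by
    ext i j
    simp only [Matrix.of_apply, Matrix.sub_apply, Matrix.smul_apply, Matrix.gram_apply,
      Function.comp_apply, ker_eq_inner, inner_smul_left, inner_smul_right, Complex.conj_conj,
      smul_eq_mul]
    ring
  have h := (hC z).dotProduct_mulVec_nonneg c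
  rw [hM, Matrix.sub_mulVec, Matrix.smul_mulVec, dotProduct_sub, dotProduct_smul,
    Matrix.star_dotProduct_gram_mulVec, Matrix.star_dotProduct_gram_mulVec,
    inner_self_eq_norm_sq_to_K, inner_self_eq_norm_sq_to_K, smul_eq_mul] at h
  have h' :
      ‖∑ i, c i • conj (φ (z i)) • R.kvec (z i)‖ ^ 2 ≤ (C * ‖∑ i, c i • R.kvec (z i)‖) ^ 2 := by
    rw [mul_pow, ← sub_nonneg, ← Complex.zero_le_real]
    push_cast
    simpa using h
  exact (sq_le_sq₀ (norm_nonneg _) (by positivity)).1 h'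

theorem norm_sum_mul_mul_eval_le
    (hC : NPointPositive n fun z w => R.ker z w * (((C : ℝ) : ℂ) ^ 2 - φ z * conj (φ w)))
    {z : Fin n → X} {c : Fin n → ℂ} {θ : ℝ} (hθ : 0 ≤ θ)
    (hc : ∀ f : H, ‖∑ i, c i * R.eval f (z i)‖ ≤ θ * ‖f‖) (f : H) :
    ‖∑ i, c i * (φ (z i) * R.eval f (z i))‖ ≤ C * θ * ‖f‖ := by
  set v := ∑ i, conj (c i) • R.kvec (z i)
  set w := ∑ i, conj (c i) • conj (φ (z i)) • R.kvec (z i)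
  have hv : ∀ f, ⟪v, f⟫_ℂ = ∑ i, c i * R.eval f (z i) := fun f => by
    simp only [v, sum_inner, inner_smul_left, Complex.conj_conj, R.reproducing]
  have hw : ⟪w, f⟫_ℂ = ∑ i, c i * (φ (z i) * R.eval f (z i)) := by
    simp only [w, sum_inner, inner_smul_left, Complex.conj_conj, R.reproducing]
  have hvθ : ‖v‖ ≤ θ := by
    rw [← innerSL_apply_norm ℂ]
    exact ContinuousLinearMap.opNorm_le_bound _ hθ fun f => by simpa [hv] using hc f
  calc ‖∑ i, c i * (φ (z i) * R.eval f (z i))‖ = ‖⟪w, f⟫_ℂ‖ := by rw [hw]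
    _ ≤ ‖w‖ * ‖f‖ := norm_inner_le_norm _ _
    _ ≤ C * ‖v‖ * ‖f‖ := by gcongr; exact norm_sum_smul_conj_smul_kvec_le hC z _
    _ ≤ C * θ * ‖f‖ := by gcongr

variable (R) in
theorem exists_norm_eval_le (S : Set X) (hS : ∀ f : H, ∃ B, ∀ z ∈ S, ‖R.eval f z‖ ≤ B) :
    ∃ N, 0 ≤ N ∧ ∀ z ∈ S, ∀ f : H, ‖R.eval f z‖ ≤ N * ‖f‖ := by
  obtain ⟨N, hN⟩ := banach_steinhaus (g := fun z : S => innerSL ℂ (R.kvec z)) fun f => by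
    obtain ⟨B, hB⟩ := hS f
    exact ⟨B, fun z => by simpa [R.reproducing] using hB z z.2⟩
  refine ⟨max N 0, le_max_right _ _, fun z hz f => ?_⟩
  rw [R.reproducing, ← innerSL_apply_apply]
  exact ((innerSL ℂ _).le_opNorm f).trans
    (mul_le_mul_of_nonneg_right ((hN ⟨z, hz⟩).trans (le_max_left _ _)) (norm_nonneg f))

end RKHS'

theorem extFn_coe {E : Type*} {Ω : Set E} (ψ : Ω → ℂ) (z : Ω) : extFn Ω ψ z = ψ z :=
  Subtype.val_injective.extend_apply ψ _ z

theorem extFn_of_mem {E : Type*} {Ω : Set E} (ψ : Ω → ℂ) {y : E} (hy : y ∈ Ω) :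
    extFn Ω ψ y = ψ ⟨y, hy⟩ :=
  extFn_coe ψ ⟨y, hy⟩

section OpenSet

variable {E : Type*} [NormedAddCommGroup E] [NormedSpace ℂ E] {Ω : Set E}

theorem lineSecondDiff_extFn (ψ : Ω → ℂ) {p u : E} {a b : ℂ} (hp : p ∈ Ω)
    (ha : p + a • u ∈ Ω) (hb : p + b • u ∈ Ω) :
    lineSecondDiff (extFn Ω ψ) p u a b
      = ∑ i, ![a - b, b, -a] i * ψ (![⟨p, hp⟩, ⟨_, ha⟩, ⟨_, hb⟩] i) := by
  simp only [lineSecondDiff, Fin.sum_univ_three, Matrix.cons_val_zero, Matrix.cons_val_one,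
    Matrix.cons_val_two, Matrix.head_cons, Matrix.tail_cons, extFn_of_mem ψ hp,
    extFn_of_mem ψ ha, extFn_of_mem ψ hb]
  ring

variable {H : Type*} [NormedAddCommGroup H] [InnerProductSpace ℂ H] [CompleteSpace H]
  {R : RKHS' Ω H} {φ : Ω → ℂ} {C : ℝ≥0}

theorem lineSecondDiffBoundedOn_extFn_mul_eval
    (hol : ∀ f : H, DifferentiableOn ℂ (extFn Ω (R.eval f)) Ω)
    (hC : NPointPositive 3 fun z w => R.ker z w * (((C : ℝ) : ℂ) ^ 2 - φ z * conj (φ w)))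
    {x : E} {r N : ℝ} (hball : closedBall x (4 * r) ⊆ Ω) (hN0 : 0 ≤ N)
    (hN : ∀ z : Ω, (z : E) ∈ closedBall x (4 * r) → ∀ f : H, ‖R.eval f z‖ ≤ N * ‖f‖)
    (f₀ : H) :
    LineSecondDiffBoundedOn (extFn Ω fun z => φ z * R.eval f₀ z) (ball x r)
      (C * ‖f₀‖ * (4 * N / r ^ 2)) := by
  intro p u a b hp ha hb
  have hsub : ball x r ⊆ Ω := ball_subset_closedBall.trans
    ((closedBall_subset_closedBall (by linarith [pos_of_mem_ball hp])).trans hball)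
  have hθ : ∀ f : H, ‖∑ i, ![a - b, b, -a] i
        * R.eval f (![⟨p, hsub hp⟩, ⟨_, hsub ha⟩, ⟨_, hsub hb⟩] i)‖
      ≤ 4 * N / r ^ 2 * ‖u‖ ^ 2 * (‖a‖ * ‖b‖ * ‖a - b‖) * ‖f‖ := by
    intro f
    rw [← lineSecondDiff_extFn]
    refine (lineSecondDiffBoundedOn_of_differentiableOn ((hol f).mono hball) (N := N * ‖f‖)
      (fun y hy => ?_) p u a b hp ha hb).trans_eq (by ring)
    rw [extFn_of_mem _ (hball hy)]
    exact hN _ hy f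
  rw [lineSecondDiff_extFn _ (hsub hp) (hsub ha) (hsub hb)]
  exact (RKHS'.norm_sum_mul_mul_eval_le hC (by positivity) hθ f₀).trans_eq (by ring)

end OpenSet

/-- generalized Hindmarsh theorem: if `H` is an RKHS of analytic
functions on an open set `Ω ⊆ ℂ^d` and `φ` has finite `3`-point multiplier norm,
then `φ` is analytic on `Ω`. -/
theorem analytic_of_threePointNorm_lt_top
    {d : ℕ} {H : Type*} [NormedAddCommGroup H] [InnerProductSpace ℂ H]
    [CompleteSpace H] (Ω : Set (EuclideanSpace ℂ (Fin d))) (hΩ : IsOpen Ω)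
    (R : RKHS' (↥Ω) H)
    (hol : ∀ f : H, DifferentiableOn ℂ (extFn Ω (R.eval f)) Ω)
    (φ : ↥Ω → ℂ) (hφ : R.nPointNorm 3 φ < ⊤) :
    DifferentiableOn ℂ (extFn Ω φ) Ω := by
  intro x hx
  obtain ⟨C, hC⟩ := R.exists_nPointPositive_of_nPointNorm_lt_top hφ
  obtain ⟨r, hr, hball⟩ : ∃ r > 0, closedBall x (4 * r) ⊆ Ω := by
    obtain ⟨ε, hε, hεΩ⟩ := Metric.isOpen_iff.1 hΩ x hx
    exact ⟨ε / 8, by positivity, (closedBall_subset_ball (by linarith)).trans hεΩ⟩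
  obtain ⟨N, hN0, hN⟩ := R.exists_norm_eval_le (Subtype.val ⁻¹' closedBall x (4 * r)) fun f => by
    obtain ⟨B, hB⟩ := (isCompact_closedBall x (4 * r)).exists_bound_of_continuousOn
      ((hol f).continuousOn.mono hball)
    exact ⟨B, fun z hz => by simpa only [extFn_coe] using hB z hz⟩
  set f₀ := R.kvec ⟨x, hx⟩
  have hg : DifferentiableAt ℂ (extFn Ω fun z => φ z * R.eval f₀ z) x :=
    differentiableAt_of_lineSecondDiffBoundedOn hr
      (lineSecondDiffBoundedOn_extFn_mul_eval hol hC hball hN0 hN f₀)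
  have hf₀ : DifferentiableAt ℂ (extFn Ω (R.eval f₀)) x :=
    (hol f₀).differentiableAt (hΩ.mem_nhds hx)
  have hf₀x : extFn Ω (R.eval f₀) x ≠ 0 := by rw [extFn_of_mem _ hx]; exact R.nondeg _
  refine ((hg.mul (hf₀.inv hf₀x)).congr_of_eventuallyEq ?_).differentiableWithinAt
  filter_upwards [hΩ.mem_nhds hx, hf₀.continuousAt.eventually_ne hf₀x] with y hy hy₀
  rw [extFn_of_mem _ hy] at hy₀ ⊢
  rw [Pi.mul_apply, Pi.inv_apply, extFn_of_mem _ hy, extFn_of_mem _ hy,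
    mul_inv_cancel_right₀ hy₀]

end
end

section
/- The two-point multiplier norm ‖·‖_{Mult(D),2} of the classical Dirichlet space D and the supremum norm over 𝔻 are not equivalent on the space of functions holomorphic in a neighborhood of the closed unit disc: there is no constant C > 0 with ‖f‖_{Mult(D),2} ≤ C·sup_{z∈𝔻}|f(z)| for all such f. In fact, for θ_r(z) = (r − z)/(1 − rz) one has ‖θ_r‖_{Mult(D),2} → ∞ as r ↗ 1, while ‖θ_r‖_∞ ≤ 1. -/
open scoped ComplexConjugate ComplexOrder ENNReal NNReal

noncomputable section

/-- A reproducing kernel Hilbert space of complex-valued functions on `X`,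
realized as an abstract Hilbert space `H` together with an injective linear
evaluation map into functions, kernel vectors and the reproducing property.
We include the standing assumption `K(x,x) ≠ 0`. -/
structure DirichletRKHS (X : Type*) (H : Type*) [NormedAddCommGroup H]
    [InnerProductSpace ℂ H] [CompleteSpace H] where
  eval : H →ₗ[ℂ] (X → ℂ)
  eval_injective : Function.Injective eval
  kvec : X → H
  reproducing : ∀ (f : H) (x : X), eval f x = (inner ℂ (kvec x) f : ℂ)
  nondeg : ∀ x : X, eval (kvec x) x ≠ 0

namespace DirichletRKHS

variable {X H : Type*} [NormedAddCommGroup H] [InnerProductSpace ℂ H] [CompleteSpace H]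

/-- The reproducing kernel `K(z,w)`. -/
def ker (R : DirichletRKHS X H) (z w : X) : ℂ := R.eval (R.kvec w) z

/-- `φ` is a multiplier of the space. -/
def IsMultiplier (R : DirichletRKHS X H) (φ : X → ℂ) : Prop :=
  ∀ f : H, ∃ g : H, R.eval g = fun x => φ x * R.eval f x

/-- The multiplier norm of `φ` (the operator norm of `M_φ`), `∞` if `φ` is
not a multiplier. -/
def multNorm (R : DirichletRKHS X H) (φ : X → ℂ) : ℝ≥0∞ :=
  ⨅ (C : ℝ≥0) (_ : R.IsMultiplier φ ∧ ∀ f g : H,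
      R.eval g = (fun x => φ x * R.eval f x) → ‖g‖ ≤ (C : ℝ) * ‖f‖), (C : ℝ≥0∞)

/-- The `n`-point multiplier norm of `φ`. -/
def nPointNorm (R : DirichletRKHS X H) (n : ℕ) (φ : X → ℂ) : ℝ≥0∞ :=
  ⨅ (C : ℝ≥0) (_ : NPointPositive n fun z w =>
      R.ker z w * (((C : ℝ) : ℂ) ^ 2 - φ z * conj (φ w))), (C : ℝ≥0∞)

end DirichletRKHS

end

noncomputable section

open DirichletRKHS

/-- The open unit disc, as a subtype of `ℂ`. -/
abbrev UnitDisc : Type := ↥(Metric.ball (0 : ℂ) 1)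

open Filter Topology

/-! The automorphism `θ_r` vanishes at `r` and maps the real point `s = θ_r(t)` to `t`.
Two-point positivity of `K(z,w)(C² - θ_r(z) conj θ_r(w))` at `s` and `r` forces the determinant
inequality `|K(s,r)|² C² ≤ K(s,s) K(r,r) (C² - t²)`. For the Dirichlet kernel, `x y K(x,y) =
log(1/(1 - x y))` on real points, and moving `s` to `r` only changes the logarithm by the bounded
amount `log((1 - t²)/(1 - r t)²)`, so the determinant inequality gives
`t² log(1/(1 - r²)) ≤ log((1 + t)/(1 - t)) C²`, which blows up as `r ↗ 1` while `t` stays fixed. -/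

theorem NPointPositive.diag_nonneg {X : Type*} {n : ℕ} {L : X → X → ℂ}
    (h : NPointPositive n L) (hn : 0 < n) (z : X) : 0 ≤ L z z :=
  (h fun _ => z).diag_nonneg (i := ⟨0, hn⟩)

theorem NPointPositive.two_mul_le {X : Type*} {L : X → X → ℂ} (h : NPointPositive 2 L)
    (z w : X) : L z w * L w z ≤ L z z * L w w := by
  have := (h ![z, w]).det_nonneg
  rw [Matrix.det_fin_two] at this
  simpa [sub_nonneg] using this

theorem NPointPositive.pick_two_point_ineq {X : Type*} {K : X → X → ℂ} {φ : X → ℂ} {C : ℝ}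
    (h : NPointPositive 2 fun z w => K z w * ((C : ℂ) ^ 2 - φ z * conj (φ w)))
    {z w : X} {a b c t : ℝ} (hzz : K z z = a) (hww : K w w = b) (hzw : K z w = c)
    (hwz : K w z = c) (hz : φ z = t) (hw : φ w = 0) :
    0 ≤ a * (C ^ 2 - t ^ 2) ∧ c ^ 2 * C ^ 4 ≤ a * b * (C ^ 2 - t ^ 2) * C ^ 2 := by
  have hdiag := h.diag_nonneg two_pos z
  have hdet := h.two_mul_le z w
  simp only [hzz, hww, hzw, hwz, hz, hw, Complex.conj_ofReal, map_zero, mul_zero, zero_mul,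
    sub_zero] at hdiag hdet
  constructor
  · have : ((0 : ℝ) : ℂ) ≤ ((a * (C ^ 2 - t ^ 2) : ℝ) : ℂ) := by
      push_cast
      convert hdiag using 2
      ring
    exact_mod_cast this
  · have : ((c ^ 2 * C ^ 4 : ℝ) : ℂ) ≤ ((a * b * (C ^ 2 - t ^ 2) * C ^ 2 : ℝ) : ℂ) := by
      push_cast
      convert hdet using 1 <;> ring
    exact_mod_cast this

section Theta

variable {𝕜 : Type*} [Field 𝕜]

def theta (r z : 𝕜) : 𝕜 := (r - z) / (1 - r * z)

theorem theta_self (r : 𝕜) : theta r r = 0 := by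
  simp [theta]

theorem theta_theta {r z : 𝕜} (hr : r ^ 2 ≠ 1) (hz : 1 - r * z ≠ 0) : theta r (theta r z) = z := by
  have hr' : 1 - r ^ 2 ≠ 0 := sub_ne_zero.mpr (Ne.symm hr)
  have hden : 1 - r * theta r z = (1 - r ^ 2) / (1 - r * z) := by
    unfold theta
    field_simp
    ring
  rw [theta, hden, theta, div_eq_iff (div_ne_zero hr' hz)]
  field_simp
  ring

theorem one_sub_sq_theta {r z : 𝕜} (hz : 1 - r * z ≠ 0) :
    1 - theta r z ^ 2 = (1 - r ^ 2) * (1 - z ^ 2) / (1 - r * z) ^ 2 := by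
  unfold theta
  field_simp
  ring

end Theta

theorem Complex.ofReal_theta (r t : ℝ) : ((theta r t : ℝ) : ℂ) = theta (r : ℂ) t := by
  simp [theta]

theorem norm_theta_le_one {r : ℝ} (hr : |r| ≤ 1) {z : ℂ} (hz : ‖z‖ ≤ 1) :
    ‖theta (r : ℂ) z‖ ≤ 1 := by
  rw [theta, norm_div]
  refine div_le_one_of_le₀ ?_ (norm_nonneg _)
  have key : ‖(r : ℂ) - z‖ ^ 2 + (1 - r ^ 2) * (1 - ‖z‖ ^ 2) = ‖1 - (r : ℂ) * z‖ ^ 2 := by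
    simp only [Complex.sq_norm, Complex.normSq_apply, Complex.sub_re, Complex.sub_im,
      Complex.mul_re, Complex.mul_im, Complex.one_re, Complex.one_im, Complex.ofReal_re,
      Complex.ofReal_im]
    ring
  have : 0 ≤ (1 - r ^ 2) * (1 - ‖z‖ ^ 2) := by
    apply mul_nonneg
    · nlinarith [abs_nonneg r, sq_abs r]
    · nlinarith [norm_nonneg z]
  exact (pow_le_pow_iff_left₀ (norm_nonneg _) (norm_nonneg _) two_ne_zero).mp (by linarith)

theorem differentiableOn_theta (r : ℂ) : DifferentiableOn ℂ (theta r) {z | 1 - r * z ≠ 0} :=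
  DifferentiableOn.div (by fun_prop) (by fun_prop) fun z hz => hz

theorem exists_isOpen_closedBall_subset_differentiableOn_theta {r : ℂ} (hr : ‖r‖ < 1) :
    ∃ U : Set ℂ, IsOpen U ∧ Metric.closedBall 0 1 ⊆ U ∧ DifferentiableOn ℂ (theta r) U := by
  refine ⟨_, isOpen_ne_fun (by fun_prop) (by fun_prop), fun z hz => ?_, differentiableOn_theta r⟩
  rw [mem_closedBall_zero_iff] at hz
  change 1 - r * z ≠ 0
  rw [sub_ne_zero]
  intro h
  have : ‖r * z‖ < 1 := by
    rw [norm_mul]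
    nlinarith [norm_nonneg r, norm_nonneg z]
  simp [← h] at this

theorem Real.log_one_sub_sq_theta_sub_log_le {r t : ℝ} (hr0 : 0 ≤ r) (hr1 : r < 1) (ht0 : 0 ≤ t)
    (ht1 : t < 1) :
    Real.log (1 - theta r t ^ 2) - Real.log (1 - r ^ 2) ≤ Real.log ((1 + t) / (1 - t)) := by
  have hrt : 0 < 1 - r * t := by nlinarith
  have hr2 : 0 < 1 - r ^ 2 := by nlinarith
  have ht2 : 0 < 1 - t ^ 2 := by nlinarith
  rw [← Real.log_div, one_sub_sq_theta hrt.ne']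
  · apply Real.log_le_log (by positivity)
    rw [show (1 - r ^ 2) * (1 - t ^ 2) / (1 - r * t) ^ 2 / (1 - r ^ 2)
        = (1 - t ^ 2) / (1 - r * t) ^ 2 by field_simp,
      div_le_div_iff₀ (by positivity) (by linarith)]
    have : 0 ≤ (1 + t) * (t * (1 - r)) * (2 - t - r * t) :=
      mul_nonneg (mul_nonneg (by linarith) (mul_nonneg ht0 (by linarith))) (by nlinarith)
    nlinarith
  · rw [one_sub_sq_theta hrt.ne']
    positivity
  · exact hr2.ne'

theorem Real.hasSum_pow_div_succ {x : ℝ} (h : |x| < 1) (hx : x ≠ 0) :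
    HasSum (fun n : ℕ => x ^ n / (n + 1)) (-Real.log (1 - x) / x) :=
  ((Real.hasSum_pow_div_log_of_abs_lt_one h).div_const x).congr_fun fun n => by
    field_simp
    ring

theorem tendsto_neg_log_one_sub_sq :
    Tendsto (fun r : ℝ => -Real.log (1 - r ^ 2)) (𝓝[<] 1) atTop := by
  have h : Tendsto (fun r : ℝ => 1 - r ^ 2) (𝓝[<] 1) (𝓝[>] 0) := by
    refine tendsto_nhdsWithin_of_tendsto_nhds_of_eventually_within _ ?_ ?_
    · have : Tendsto (fun r : ℝ => 1 - r ^ 2) (𝓝 1) (𝓝 (1 - 1 ^ 2)) :=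
        (continuous_const.sub (continuous_pow 2)).tendsto 1
      simpa using this.mono_left nhdsWithin_le_nhds
    · filter_upwards [Ioo_mem_nhdsLT (show (0 : ℝ) < 1 by norm_num)] with r hr
      simp only [Set.mem_Ioi, sub_pos]
      nlinarith [hr.1, hr.2]
  exact tendsto_neg_atBot_atTop.comp (Real.tendsto_log_nhdsGT_zero.comp h)

namespace DirichletRKHS

variable {H : Type*} [NormedAddCommGroup H] [InnerProductSpace ℂ H] [CompleteSpace H]
  {R : DirichletRKHS UnitDisc H}

def HasDirichletKernel (R : DirichletRKHS UnitDisc H) : Prop :=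
  ∀ z w : UnitDisc, R.ker z w = ∑' n : ℕ, ((z : ℂ) * conj (w : ℂ)) ^ n / (n + 1)

theorem HasDirichletKernel.ker_eq_ofReal (hR : R.HasDirichletKernel) {z w : UnitDisc} {x y : ℝ}
    (hz : (z : ℂ) = x) (hw : (w : ℂ) = y) (hxy : x * y ≠ 0) :
    R.ker z w = ((-Real.log (1 - x * y) / (x * y) : ℝ) : ℂ) := by
  have habs : ∀ {u : UnitDisc} {v : ℝ}, (u : ℂ) = v → |v| < 1 := fun {u v} huv => by
    simpa [huv] using u.2
  have hxy1 : |x * y| < 1 := by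
    rw [abs_mul]
    exact mul_lt_one_of_nonneg_of_lt_one_left (abs_nonneg x) (habs hz) (habs hw).le
  have hsum := Complex.hasSum_ofReal.mpr (Real.hasSum_pow_div_succ hxy1 hxy)
  rw [hR, hz, hw, Complex.conj_ofReal, ← hsum.tsum_eq]
  push_cast
  rfl

theorem HasDirichletKernel.sq_mul_neg_log_le (hR : R.HasDirichletKernel) {r t C : ℝ}
    (ht0 : 0 < t) (htr : t < r) (hr1 : r < 1)
    (h : NPointPositive 2 fun z w : UnitDisc =>
      R.ker z w * ((C : ℂ) ^ 2 - theta (r : ℂ) z * conj (theta (r : ℂ) w))) :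
    t ^ 2 * -Real.log (1 - r ^ 2) ≤ Real.log ((1 + t) / (1 - t)) * C ^ 2 := by
  have hr0 : 0 < r := ht0.trans htr
  have hrt : 0 < 1 - r * t := by nlinarith
  set s := theta r t with hs
  have hs0 : 0 < s := div_pos (by linarith) hrt
  have hsr : s < r := by
    have : r - s = t * (1 - r ^ 2) / (1 - r * t) := by
      rw [hs, theta]
      field_simp
      ring
    have : 0 < t * (1 - r ^ 2) / (1 - r * t) := div_pos (mul_pos ht0 (by nlinarith)) hrt
    linarith
  have hθs : theta (r : ℂ) s = t := by
    rw [← Complex.ofReal_theta, hs, theta_theta (by nlinarith) hrt.ne']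
  let zs : UnitDisc := ⟨s, by simpa [abs_of_pos hs0] using hsr.trans hr1⟩
  let zr : UnitDisc := ⟨r, by simpa [abs_of_pos hr0] using hr1⟩
  obtain ⟨hdiag, hdet⟩ := h.pick_two_point_ineq (z := zs) (w := zr)
    (hR.ker_eq_ofReal rfl rfl (by positivity)) (hR.ker_eq_ofReal rfl rfl (by positivity))
    (hR.ker_eq_ofReal rfl rfl (by positivity))
    ((hR.ker_eq_ofReal rfl rfl (by positivity)).trans (by rw [mul_comm r s])) hθs (theta_self _)
  set A := -Real.log (1 - r * r)
  set B := -Real.log (1 - s * s)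
  set E := -Real.log (1 - s * r)
  have hB : 0 < B := neg_pos.mpr (Real.log_neg (by nlinarith) (by nlinarith))
  have hBE : B ≤ E := neg_le_neg (Real.log_le_log (by nlinarith) (by nlinarith))
  have htC : t ^ 2 ≤ C ^ 2 :=
    sub_nonneg.mp ((mul_nonneg_iff_of_pos_left (by positivity)).mp hdiag)
  have hEC : E ^ 2 * C ^ 2 ≤ B * A * (C ^ 2 - t ^ 2) := by
    have hC : 0 < C ^ 2 := (pow_pos ht0 2).trans_le htC
    refine le_of_mul_le_mul_right ?_ (div_pos hC (by positivity) : 0 < C ^ 2 / (s * r) ^ 2)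
    exact (by ring : _ = _).trans_le (hdet.trans_eq (by ring))
  have hBC : B * C ^ 2 ≤ A * (C ^ 2 - t ^ 2) := by
    refine le_of_mul_le_mul_left ?_ hB
    nlinarith [mul_le_mul_of_nonneg_right (pow_le_pow_left₀ hB.le hBE 2) (sq_nonneg C)]
  have hlog : A - B ≤ Real.log ((1 + t) / (1 - t)) := by
    have := Real.log_one_sub_sq_theta_sub_log_le hr0.le hr1 ht0.le (htr.trans hr1)
    rw [← hs, sq, sq] at this
    linarith
  rw [sq r]
  nlinarith [mul_le_mul_of_nonneg_right hlog (sq_nonneg C)]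

theorem HasDirichletKernel.ofReal_le_nPointNorm_two_theta (hR : R.HasDirichletKernel)
    {r t : ℝ} (ht0 : 0 < t) (htr : t < r) (hr1 : r < 1) :
    ENNReal.ofReal (t * √(-Real.log (1 - r ^ 2) / Real.log ((1 + t) / (1 - t)))) ≤
      R.nPointNorm 2 fun z => theta (r : ℂ) z := by
  refine le_iInf₂ fun C hC => ?_
  rw [← ENNReal.ofReal_coe_nnreal]
  refine ENNReal.ofReal_le_ofReal ?_
  have hL : 0 < Real.log ((1 + t) / (1 - t)) :=
    Real.log_pos ((one_lt_div (by linarith)).mpr (by linarith))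
  have hbound := hR.sq_mul_neg_log_le ht0 htr hr1 hC
  calc t * √(-Real.log (1 - r ^ 2) / Real.log ((1 + t) / (1 - t)))
      = √(t ^ 2 * -Real.log (1 - r ^ 2) / Real.log ((1 + t) / (1 - t))) := by
        rw [mul_div_assoc, Real.sqrt_mul (sq_nonneg t), Real.sqrt_sq ht0.le]
    _ ≤ C := (Real.sqrt_le_left C.2).mpr ((div_le_iff₀ hL).mpr (hbound.trans_eq (mul_comm _ _)))

theorem HasDirichletKernel.tendsto_nPointNorm_two_theta (hR : R.HasDirichletKernel) :
    Tendsto (fun r : ℝ => R.nPointNorm 2 fun z => theta (r : ℂ) z) (𝓝[<] 1) (𝓝 ⊤) := by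
  have hL : 0 < Real.log ((1 + 1 / 2) / (1 - 1 / 2)) := Real.log_pos (by norm_num)
  have hbound := ENNReal.tendsto_ofReal_atTop.comp <|
    (Real.tendsto_sqrt_atTop.comp (tendsto_neg_log_one_sub_sq.atTop_div_const hL)).const_mul_atTop
      (by norm_num : (0 : ℝ) < 1 / 2)
  refine tendsto_nhds_top_mono hbound ?_
  filter_upwards [Ioo_mem_nhdsLT (show (1 / 2 : ℝ) < 1 by norm_num)] with r hr
  exact hR.ofReal_le_nPointNorm_two_theta (by norm_num) hr.1 hr.2

end DirichletRKHS

/-- on the classical Dirichlet space, the two-point multiplier norm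
is not dominated by the sup norm on functions holomorphic in a neighbourhood of
the closed disc; indeed it blows up along the automorphisms
`θ_r(z) = (r-z)/(1-rz)` as `r ↗ 1`, while `‖θ_r‖_∞ ≤ 1`. -/
theorem dirichlet_twoPointNorm_not_equivalent_supNorm
    {H : Type*} [NormedAddCommGroup H] [InnerProductSpace ℂ H] [CompleteSpace H]
    (R : DirichletRKHS UnitDisc H)
    (hker : ∀ z w : UnitDisc,
      R.ker z w = ∑' n : ℕ, ((z : ℂ) * conj (w : ℂ)) ^ n / (n + 1)) :
    (¬ ∃ C : ℝ, 0 < C ∧ ∀ f : ℂ → ℂ,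
        (∃ U : Set ℂ, IsOpen U ∧ Metric.closedBall (0 : ℂ) 1 ⊆ U ∧
          DifferentiableOn ℂ f U) →
        R.nPointNorm 2 (fun z : UnitDisc => f z) ≤
          ENNReal.ofReal (C * ⨆ z : UnitDisc, ‖f z‖)) ∧
    Filter.Tendsto
        (fun r : ℝ => R.nPointNorm 2
          (fun z : UnitDisc => ((r : ℂ) - z) / (1 - (r : ℂ) * z)))
        (nhdsWithin 1 (Set.Iio 1)) (nhds ⊤) ∧
    ∀ r : ℝ, 0 ≤ r → r < 1 → ∀ z : UnitDisc,
      ‖((r : ℂ) - z) / (1 - (r : ℂ) * z)‖ ≤ 1 := by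
  have hθ (r : ℝ) (h0 : 0 ≤ r) (h1 : r < 1) (z : UnitDisc) : ‖theta (r : ℂ) z‖ ≤ 1 :=
    norm_theta_le_one (abs_le.mpr ⟨by linarith, h1.le⟩) (mem_ball_zero_iff.mp z.2).le
  have hblowup := DirichletRKHS.HasDirichletKernel.tendsto_nPointNorm_two_theta hker
  refine ⟨?_, hblowup, hθ⟩
  rintro ⟨C, hC, hdom⟩
  obtain ⟨r, hlt, hr⟩ := ((hblowup.eventually (eventually_gt_nhds ENNReal.ofReal_lt_top)).and
    (Ioo_mem_nhdsLT one_pos)).exists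
  have hU := exists_isOpen_closedBall_subset_differentiableOn_theta (r := r)
    (by simpa [abs_of_pos hr.1] using hr.2)
  have hsup : C * ⨆ z : UnitDisc, ‖theta (r : ℂ) z‖ ≤ C :=
    mul_le_of_le_one_right hC.le (Real.iSup_le (hθ r hr.1.le hr.2) zero_le_one)
  exact (hlt.trans_le ((hdom _ hU).trans (ENNReal.ofReal_le_ofReal hsup))).false

end
end

section
/- Let S₁ and S₂ be unilateral weighted shifts on a Hilbert space with orthonormal basis (e_n)_{n≥0}, given by S₁e_n = α_n e_{n+1} and S₂e_n = β_n e_{n+1} with α_n, β_n > 0 for all n. If β_n ≤ α_n for all n ∈ ℕ₀, then the map p(S₁) ↦ p(S₂) for polynomials p is a unital complete contraction; i.e., for every r ∈ ℕ and every r × r matrix of polynomials [p_{ij}], ‖[p_{ij}(S₂)]‖ ≤ ‖[p_{ij}(S₁)]‖ (operator norms on the r-fold direct sum). -/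
/-!
Write `β t = α t * Re (z t)` with `‖z t‖ = 1`. For a sign pattern `ε : Fin M → Bool` let the
phase at `t < M` be `z t` or `conj (z t)` according to `ε t`, and let `D_ε` be the diagonal
unitary `e n ↦ (∏ t < n, phase t) • e n`. Then `D_ε S₁ D_ε⁻¹` is the weighted shift with weights
`phase t * α t`, and since the phases at different `t` are chosen independently, averaging
`∏ t ∈ I, phase t` over all `ε` gives `∏ t ∈ I, Re (z t)` for `I ⊆ [0, M)`. Hence `p(S₂) x` is
the average of `D_ε p(S₁) D_ε⁻¹ x` whenever `x ∈ span {e n | n < N}` and `N + deg p ≤ M`. Each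
`D_ε p(S₁) D_ε⁻¹` inherits the matrix bound of `p(S₁)`, so by convexity `p(S₂)` satisfies it on
these vectors, and by density on all of `H`.
-/

open Finset Polynomial ComplexConjugate
open scoped lp ENNReal

noncomputable section

section Diagonal

variable {ι 𝕜 : Type*} [RCLike 𝕜]

lemma lp.memℓp_mul_of_norm_le_one {p : ℝ≥0∞} {u : ι → 𝕜} (hu : ∀ i, ‖u i‖ ≤ 1)
    (x : ℓ^p(ι, 𝕜)) : Memℓp (fun i => u i * x i) p :=
  (lp.memℓp x).mono' fun i => by
    rw [norm_mul]; exact mul_le_of_le_one_left (norm_nonneg _) (hu i)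

def lp.diagonal {p : ℝ≥0∞} [Fact (1 ≤ p)] (u : ι → 𝕜) (hu : ∀ i, ‖u i‖ = 1) :
    ℓ^p(ι, 𝕜) ≃ₗᵢ[𝕜] ℓ^p(ι, 𝕜) where
  toFun x := ⟨fun i => u i * x i, lp.memℓp_mul_of_norm_le_one (fun i => (hu i).le) x⟩
  invFun x := ⟨fun i => (u i)⁻¹ * x i, lp.memℓp_mul_of_norm_le_one (by simp [hu]) x⟩
  map_add' x y := by ext i; exact mul_add (u i) (x i) (y i)
  map_smul' c x := by ext i; simp [mul_left_comm]
  left_inv x := by ext i; simp [← norm_ne_zero_iff, hu]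
  right_inv x := by ext i; simp [← norm_ne_zero_iff, hu]
  norm_map' x := by
    have hp : p ≠ 0 := (zero_lt_one.trans_le Fact.out).ne'
    have h : ∀ i, ‖x i‖ = ‖u i * x i‖ := fun i => by simp [hu]
    exact le_antisymm (lp.norm_mono hp fun i => (h i).ge) (lp.norm_mono hp fun i => (h i).le)

variable {H : Type*} [NormedAddCommGroup H] [InnerProductSpace 𝕜 H]

def HilbertBasis.diagonal (e : HilbertBasis ι 𝕜 H) (u : ι → 𝕜) (hu : ∀ i, ‖u i‖ = 1) :
    H ≃ₗᵢ[𝕜] H :=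
  e.repr.trans ((lp.diagonal u hu).trans e.repr.symm)

lemma HilbertBasis.diagonal_apply_self (e : HilbertBasis ι 𝕜 H) (u : ι → 𝕜)
    (hu : ∀ i, ‖u i‖ = 1) (i : ι) : e.diagonal u hu (e i) = u i • e i := by
  classical
  have : lp.diagonal u hu (lp.single 2 i 1) = u i • lp.single 2 i 1 := by
    ext j; by_cases h : j = i <;> simp [lp.diagonal, lp.single_apply, h]
  simp [HilbertBasis.diagonal, this, e.repr_self, e.repr_symm_single]

lemma HilbertBasis.diagonal_symm_apply_self (e : HilbertBasis ι 𝕜 H) (u : ι → 𝕜)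
    (hu : ∀ i, ‖u i‖ = 1) (i : ι) : (e.diagonal u hu).symm (e i) = (u i)⁻¹ • e i := by
  rw [LinearIsometryEquiv.symm_apply_eq, map_smul, diagonal_apply_self, smul_smul,
    inv_mul_cancel₀ (by simp [← norm_ne_zero_iff, hu]), one_smul]

end Diagonal

section WeightedShift

variable {𝕜 E : Type*} [NontriviallyNormedField 𝕜] [NormedAddCommGroup E] [NormedSpace 𝕜 E]
  {S : E →L[𝕜] E} {v : ℕ → E} {γ : ℕ → 𝕜}

lemma weightedShift_pow_apply (hS : ∀ n, S (v n) = γ n • v (n + 1)) (k n : ℕ) :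
    (S ^ k) (v n) = (∏ t ∈ range k, γ (n + t)) • v (n + k) := by
  induction k generalizing n with
  | zero => simp
  | succ k ih =>
    rw [pow_succ, mul_apply_eq_comp, hS, map_smul, ih, smul_smul,
      prod_range_succ', add_zero, mul_comm]
    simp only [add_assoc, add_comm 1]

lemma aeval_weightedShift_apply (hS : ∀ n, S (v n) = γ n • v (n + 1)) (q : 𝕜[X]) (n : ℕ) :
    aeval S q (v n) =
      ∑ k ∈ range (q.natDegree + 1), (q.coeff k * ∏ t ∈ range k, γ (n + t)) • v (n + k) := by
  simp only [aeval_eq_sum_range, _root_.sum_apply, smul_apply,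
    weightedShift_pow_apply hS, smul_smul]

end WeightedShift

section Phase

variable (z : ℕ → ℂ) {M : ℕ}

def phase (ε : Fin M → Bool) (t : ℕ) : ℂ :=
  if h : t < M then (if ε ⟨t, h⟩ then z t else conj (z t)) else 1

variable {z}

lemma norm_phase (hz : ∀ t, ‖z t‖ = 1) (ε : Fin M → Bool) (t : ℕ) : ‖phase z ε t‖ = 1 := by
  unfold phase; split_ifs <;> simp [hz]

lemma prod_eq_prod_fin_ite {s : Finset ℕ} (hs : s ⊆ range M) (g : ℕ → ℂ) :
    ∏ t ∈ s, g t = ∏ t : Fin M, if (t : ℕ) ∈ s then g t else 1 := by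
  rw [Fin.prod_univ_eq_prod_range (fun t => if t ∈ s then g t else 1), prod_ite_mem,
    inter_eq_right.mpr hs]

lemma sum_prod_phase {s : Finset ℕ} (hs : s ⊆ range M) :
    ∑ ε : Fin M → Bool, ∏ t ∈ s, phase z ε t = 2 ^ M * ∏ t ∈ s, ((z t).re : ℂ) := by
  have hfactor : ∀ t : Fin M, ∑ b : Bool,
      (if (t : ℕ) ∈ s then (if b then z t else conj (z t)) else 1) =
      2 * if (t : ℕ) ∈ s then ((z t).re : ℂ) else 1 := by
    intro t
    split_ifs
    · simp [Complex.add_conj]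
    · simp
  simp_rw [prod_eq_prod_fin_ite hs, phase, dif_pos (Fin.is_lt _), Fin.eta]
  rw [← Fintype.prod_sum fun (t : Fin M) (b : Bool) =>
    if (t : ℕ) ∈ s then (if b then z t else conj (z t)) else 1]
  simp_rw [hfactor, prod_mul_distrib, prod_const, card_univ, Fintype.card_fin]

end Phase

section BlockBound

variable {𝕜 E κ : Type*} [RCLike 𝕜] [NormedAddCommGroup E] [NormedSpace 𝕜 E] [Fintype κ]

def BlockBoundAt (A : κ → κ → E →L[𝕜] E) (C : ℝ) (f : κ → E) : Prop :=
  ∑ i, ‖∑ j, A i j (f j)‖ ^ 2 ≤ C ^ 2 * ∑ i, ‖f i‖ ^ 2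

lemma blockBoundAt_iff {A : κ → κ → E →L[𝕜] E} {C : ℝ} {f : κ → E} :
    BlockBoundAt A C f ↔
      ‖WithLp.toLp 2 fun i => ∑ j, A i j (f j)‖ ≤ |C| * ‖WithLp.toLp 2 f‖ := by
  rw [BlockBoundAt, ← pow_le_pow_iff_left₀ (norm_nonneg _) (by positivity) two_ne_zero,
    mul_pow, sq_abs, PiLp.norm_sq_eq_of_L2, PiLp.norm_sq_eq_of_L2]

lemma isClosed_setOf_blockBoundAt (A : κ → κ → E →L[𝕜] E) (C : ℝ) :
    IsClosed {f | BlockBoundAt A C f} :=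
  isClosed_le (by fun_prop) (by fun_prop)

lemma blockBoundAt_conj_iff (U : E ≃ₗᵢ[𝕜] E) {A : κ → κ → E →L[𝕜] E} {C : ℝ} {f : κ → E} :
    BlockBoundAt (fun i j => U.toContinuousLinearEquiv.conjContinuousAlgEquiv (A i j)) C f ↔
      BlockBoundAt A C fun j => U.symm (f j) := by
  simp [BlockBoundAt, ← map_sum]

lemma blockBoundAt_of_nsmul_eq_sum {ι : Type*} [Fintype ι] [Nonempty ι]
    {A : ι → κ → κ → E →L[𝕜] E} {B : κ → κ → E →L[𝕜] E} {C : ℝ} {f : κ → E}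
    (hA : ∀ ε, BlockBoundAt (A ε) C f)
    (hB : ∀ i j, Fintype.card ι • B i j (f j) = ∑ ε, A ε i j (f j)) :
    BlockBoundAt B C f := by
  simp_rw [blockBoundAt_iff] at hA ⊢
  have hsum : Fintype.card ι • (WithLp.toLp 2 fun i => ∑ j, B i j (f j) : PiLp 2 fun _ : κ => E) =
      ∑ ε, WithLp.toLp 2 fun i => ∑ j, A ε i j (f j) := by
    ext i
    simp [hB, Finset.smul_sum, Finset.sum_comm (γ := ι)]
  have hcard : (0 : ℝ) < Fintype.card ι := by exact_mod_cast Fintype.card_pos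
  refine le_of_mul_le_mul_left ?_ hcard
  calc (Fintype.card ι : ℝ) * ‖WithLp.toLp 2 fun i => ∑ j, B i j (f j)‖
      = ‖∑ ε, WithLp.toLp 2 fun i => ∑ j, A ε i j (f j)‖ := by
        rw [← hsum, RCLike.norm_nsmul 𝕜, nsmul_eq_mul]
    _ ≤ ∑ ε : ι, |C| * ‖WithLp.toLp 2 f‖ := (norm_sum_le _ _).trans (sum_le_sum fun ε _ => hA ε)
    _ = Fintype.card ι * (|C| * ‖WithLp.toLp 2 f‖) := by rw [sum_const, card_univ, nsmul_eq_mul]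

end BlockBound

lemma HilbertBasis.mem_of_isClosed_of_forall_partialSum {𝕜 H κ : Type*} [RCLike 𝕜]
    [NormedAddCommGroup H] [InnerProductSpace 𝕜 H] (e : HilbertBasis ℕ 𝕜 H) {K : Set (κ → H)}
    (hK : IsClosed K) (h : ∀ (N : ℕ) (a : κ → ℕ → 𝕜), (fun j => ∑ n ∈ range N, a j n • e n) ∈ K)
    (f : κ → H) : f ∈ K :=
  hK.mem_of_tendsto (tendsto_pi_nhds.mpr fun j => (e.hasSum_repr (f j)).tendsto_sum_nat)
    (Filter.Eventually.of_forall fun N => h N fun j n => e.repr (f j) n)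

section PhaseConj

variable {H : Type*} [NormedAddCommGroup H] [InnerProductSpace ℂ H] (e : HilbertBasis ℕ ℂ H)
  {z : ℕ → ℂ} (hz : ∀ t, ‖z t‖ = 1) {M : ℕ}

def phaseConj (ε : Fin M → Bool) : (H →L[ℂ] H) ≃A[ℂ] (H →L[ℂ] H) :=
  (e.diagonal (fun n => ∏ t ∈ range n, phase z ε t) fun n => by
    simp [norm_prod, norm_phase hz]).toContinuousLinearEquiv.conjContinuousAlgEquiv

variable {e hz} {S T : H →L[ℂ] H} {γ : ℕ → ℂ}

lemma phaseConj_apply_self (hS : ∀ n, S (e n) = γ n • e (n + 1)) (ε : Fin M → Bool) (n : ℕ) :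
    phaseConj e hz ε S (e n) = (phase z ε n * γ n) • e (n + 1) := by
  have hu : ∏ t ∈ range n, phase z ε t ≠ 0 :=
    prod_ne_zero_iff.mpr fun t _ => norm_ne_zero_iff.mp (by simp [norm_phase hz])
  simp only [phaseConj, ContinuousLinearEquiv.conjContinuousAlgEquiv_apply_apply,
    LinearIsometryEquiv.coe_toContinuousLinearEquiv,
    LinearIsometryEquiv.coe_symm_toContinuousLinearEquiv]
  rw [HilbertBasis.diagonal_symm_apply_self, map_smul, hS, smul_smul, map_smul,
    HilbertBasis.diagonal_apply_self, smul_smul, prod_range_succ]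
  congr 1
  field_simp

lemma sum_aeval_phaseConj_apply_self (hS : ∀ n, S (e n) = γ n • e (n + 1))
    (hT : ∀ n, T (e n) = (γ n * (z n).re) • e (n + 1)) (q : ℂ[X]) {n : ℕ}
    (hn : n + q.natDegree ≤ M) :
    ∑ ε : Fin M → Bool, aeval (phaseConj e hz ε S) q (e n) = 2 ^ M • aeval T q (e n) := by
  have hcoeff : ∀ k ∈ range (q.natDegree + 1), ∑ ε : Fin M → Bool,
      ∏ t ∈ range k, (phase z ε (n + t) * γ (n + t)) =
        2 ^ M * ∏ t ∈ range k, (γ (n + t) * (z (n + t)).re) := by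
    intro k hk
    have hs : Ico n (n + k) ⊆ range M := fun t ht => by
      simp only [mem_Ico, mem_range] at ht hk ⊢; omega
    have := sum_prod_phase (z := z) hs
    simp only [prod_Ico_eq_prod_range, Nat.add_sub_cancel_left] at this
    simp only [prod_mul_distrib, ← sum_mul, this]
    ring
  simp only [aeval_weightedShift_apply (phaseConj_apply_self hS _),
    aeval_weightedShift_apply hT, smul_sum]
  rw [sum_comm]
  refine sum_congr rfl fun k hk => ?_
  rw [← sum_smul, ← mul_sum, hcoeff k hk, ← Nat.cast_smul_eq_nsmul ℂ, smul_smul]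
  congr 1
  push_cast
  ring

lemma sum_aeval_phaseConj_apply_partialSum (hS : ∀ n, S (e n) = γ n • e (n + 1))
    (hT : ∀ n, T (e n) = (γ n * (z n).re) • e (n + 1)) (q : ℂ[X]) (a : ℕ → ℂ) {N : ℕ}
    (hN : N + q.natDegree ≤ M) :
    ∑ ε : Fin M → Bool, aeval (phaseConj e hz ε S) q (∑ n ∈ range N, a n • e n) =
      2 ^ M • aeval T q (∑ n ∈ range N, a n • e n) := by
  simp only [map_sum, map_smul, smul_sum]
  rw [sum_comm]
  refine sum_congr rfl fun n hn => ?_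
  have hn : n + q.natDegree ≤ M := by simp only [mem_range] at hn; omega
  rw [← smul_sum, sum_aeval_phaseConj_apply_self hS hT q hn, smul_comm]

end PhaseConj

lemma Complex.exists_norm_eq_one_re_eq {c : ℝ} (hc : |c| ≤ 1) : ∃ z : ℂ, ‖z‖ = 1 ∧ z.re = c :=
  ⟨exp (Real.arccos c * I), norm_exp_ofReal_mul_I _, by
    rw [exp_ofReal_mul_I_re, Real.cos_arccos (abs_le.mp hc).1 (abs_le.mp hc).2]⟩

theorem weighted_shift_domination_completely_contractive_general
    {H : Type*} [NormedAddCommGroup H] [InnerProductSpace ℂ H]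
    (e : HilbertBasis ℕ ℂ H) (S₁ S₂ : H →L[ℂ] H) (α β : ℕ → ℝ)
    (hα : ∀ n, 0 < α n) (hβ : ∀ n, 0 < β n)
    (hS₁ : ∀ n : ℕ, S₁ (e n) = (α n : ℂ) • e (n + 1))
    (hS₂ : ∀ n : ℕ, S₂ (e n) = (β n : ℂ) • e (n + 1))
    (hdom : ∀ n : ℕ, β n ≤ α n) :
    ∀ (r : ℕ) (p : Fin r → Fin r → Polynomial ℂ) (C : ℝ), 0 ≤ C →
      (∀ f : Fin r → H,
        ∑ i : Fin r, ‖∑ j : Fin r, (Polynomial.aeval S₁ (p i j) : H →L[ℂ] H) (f j)‖ ^ 2 ≤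
          C ^ 2 * ∑ i : Fin r, ‖f i‖ ^ 2) →
      ∀ f : Fin r → H,
        ∑ i : Fin r, ‖∑ j : Fin r, (Polynomial.aeval S₂ (p i j) : H →L[ℂ] H) (f j)‖ ^ 2 ≤
          C ^ 2 * ∑ i : Fin r, ‖f i‖ ^ 2 := by
  intro r p C _ h₁
  have hratio : ∀ t, |β t / α t| ≤ 1 := fun t => by
    rw [abs_div, abs_of_pos (hα t), abs_of_pos (hβ t)]
    exact (div_le_one (hα t)).mpr (hdom t)
  choose z hz hre using fun t => Complex.exists_norm_eq_one_re_eq (hratio t)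
  have hS₂' : ∀ n, S₂ (e n) = ((α n : ℂ) * (z n).re) • e (n + 1) := fun n => by
    rw [hS₂, hre, Complex.ofReal_div, mul_div_cancel₀ _ (by exact_mod_cast (hα n).ne')]
  refine e.mem_of_isClosed_of_forall_partialSum (isClosed_setOf_blockBoundAt _ C) fun N a => ?_
  obtain ⟨d, hd⟩ := Finite.exists_le fun ij : Fin r × Fin r => (p ij.1 ij.2).natDegree
  refine blockBoundAt_of_nsmul_eq_sum (ι := Fin (N + d) → Bool)
    (A := fun ε i j => aeval (phaseConj e hz ε S₁) (p i j)) (fun ε => ?_) fun i j => ?_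
  · simp only [aeval_algHom_apply]
    exact (blockBoundAt_conj_iff _).mpr (h₁ _)
  · rw [Fintype.card_fun, Fintype.card_bool, Fintype.card_fin]
    exact (sum_aeval_phaseConj_apply_partialSum hS₁ hS₂' _ _ (by grind [hd (i, j)])).symm

/-- Kacnelson-type domination for weighted shifts: if the weights
of the shift `S₂` are dominated by those of `S₁`, then `p(S₁) ↦ p(S₂)` is a
(unital) complete contraction: every bound for a matrix of polynomials in `S₁`
is a bound for the same matrix of polynomials in `S₂`. -/
theorem weighted_shift_domination_completely_contractive
    {H : Type*} [NormedAddCommGroup H] [InnerProductSpace ℂ H] [CompleteSpace H]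
    (e : HilbertBasis ℕ ℂ H) (S₁ S₂ : H →L[ℂ] H) (α β : ℕ → ℝ)
    (hα : ∀ n, 0 < α n) (hβ : ∀ n, 0 < β n)
    (hS₁ : ∀ n : ℕ, S₁ (e n) = (α n : ℂ) • e (n + 1))
    (hS₂ : ∀ n : ℕ, S₂ (e n) = (β n : ℂ) • e (n + 1))
    (hdom : ∀ n : ℕ, β n ≤ α n) :
    ∀ (r : ℕ) (p : Fin r → Fin r → Polynomial ℂ) (C : ℝ), 0 ≤ C →
      (∀ f : Fin r → H,
        ∑ i : Fin r, ‖∑ j : Fin r, (Polynomial.aeval S₁ (p i j) : H →L[ℂ] H) (f j)‖ ^ 2 ≤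
          C ^ 2 * ∑ i : Fin r, ‖f i‖ ^ 2) →
      ∀ f : Fin r → H,
        ∑ i : Fin r, ‖∑ j : Fin r, (Polynomial.aeval S₂ (p i j) : H →L[ℂ] H) (f j)‖ ^ 2 ≤
          C ^ 2 * ∑ i : Fin r, ‖f i‖ ^ 2 :=
  weighted_shift_domination_completely_contractive_general e S₁ S₂ α β hα hβ hS₁ hS₂ hdom

end
end

section
/- Let d ≥ 1 be an integer. For k ∈ ℕ₀ and α ∈ ℕ₀^d, define w_{k,α} > 0 by w_{k,α}² = d^d · (∏_{j=1}^{d} (α_j + k + 1)) / (∏_{j=1}^{d} (|α| + kd + j)), where |α| = α_1 + ⋯ + α_d. Then w_{k,α} ≤ w_{k,0} for all k ∈ ℕ₀ and all α ∈ ℕ₀^d. -/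
/-!
By AM–GM, `d^d ∏_j (α_j + k + 1) ≤ (|α| + kd + d)^d`. It then suffices to compare the
remaining products factor by factor:
`(|α| + kd + d)(kd + j) ≤ d(k + 1)(|α| + kd + j)` for `1 ≤ j ≤ d`, the difference being
`|α|(d - j) ≥ 0`.
-/

open Finset

theorem Real.card_pow_mul_prod_le_sum_pow {ι : Type*} (s : Finset ι) (f : ι → ℝ)
    (hf : ∀ i ∈ s, 0 ≤ f i) : (#s : ℝ) ^ #s * ∏ i ∈ s, f i ≤ (∑ i ∈ s, f i) ^ #s := by
  obtain rfl | hs := s.eq_empty_or_nonempty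
  · simp
  have hn : (0 : ℝ) < #s := by exact_mod_cast hs.card_pos
  have amgm := Real.geom_mean_le_arith_mean_weighted s (fun _ ↦ (#s : ℝ)⁻¹) f
    (fun _ _ ↦ by positivity) (by simp [hn.ne']) hf
  rwa [Real.finsetProd_rpow s f hf, ← mul_sum,
    Real.rpow_inv_le_iff_of_pos (prod_nonneg hf)
      (mul_nonneg (by positivity) (sum_nonneg hf)) hn, Real.rpow_natCast,
    mul_pow, inv_pow, le_inv_mul_iff₀ (by positivity)] at amgm

theorem shift_weight_factor_le {s k d t : ℝ} (hs : 0 ≤ s) (ht : t ≤ d) :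
    (s + k * d + d) * (k * d + t) ≤ d * (k + 1) * (s + k * d + t) := by
  nlinarith [mul_nonneg hs (sub_nonneg.2 ht)]

theorem shift_weight_prod_le (d : ℕ) {s k : ℝ} (hs : 0 ≤ s) (hk : 0 ≤ k) :
    (s + k * d + d) ^ d * ∏ j : Fin d, (k * d + ((j : ℕ) + 1)) ≤
      (d * (k + 1)) ^ d * ∏ j : Fin d, (s + k * d + ((j : ℕ) + 1)) := by
  rw [← Fin.prod_const d (s + k * d + d), ← Fin.prod_const d (d * (k + 1)), ← prod_mul_distrib,
    ← prod_mul_distrib]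
  refine prod_le_prod (fun j _ ↦ by positivity) fun j _ ↦ shift_weight_factor_le hs ?_
  exact_mod_cast j.isLt

theorem shift_weights_le_general (d : ℕ) (k : ℕ) (α : Fin d → ℕ) :
    Real.sqrt ((d : ℝ) ^ d * (∏ j : Fin d, ((α j : ℝ) + k + 1)) /
        ∏ j : Fin d, ((∑ i : Fin d, (α i : ℝ)) + k * d + ((j : ℕ) + 1))) ≤
      Real.sqrt ((d : ℝ) ^ d * ((k : ℝ) + 1) ^ d /
        ∏ j : Fin d, ((k : ℝ) * d + ((j : ℕ) + 1))) := by
  refine Real.sqrt_le_sqrt ?_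
  set s : ℝ := ∑ i, (α i : ℝ)
  have hs : 0 ≤ s := sum_nonneg fun i _ ↦ by positivity
  have amgm : (d : ℝ) ^ d * ∏ j, ((α j : ℝ) + k + 1) ≤ (s + k * d + d) ^ d := by
    have sum_eq : ∑ j : Fin d, ((α j : ℝ) + k + 1) = s + k * d + d := by
      simp [s, sum_add_distrib, mul_comm]
    simpa [sum_eq] using
      Real.card_pow_mul_prod_le_sum_pow univ (fun j ↦ (α j : ℝ) + k + 1) fun j _ ↦ by positivity
  rw [div_le_div_iff₀ (prod_pos fun j _ ↦ by positivity) (prod_pos fun j _ ↦ by positivity)]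
  calc ((d : ℝ) ^ d * ∏ j, ((α j : ℝ) + k + 1)) * ∏ j : Fin d, ((k : ℝ) * d + ((j : ℕ) + 1))
      ≤ (s + k * d + d) ^ d * ∏ j : Fin d, ((k : ℝ) * d + ((j : ℕ) + 1)) := by gcongr
    _ ≤ (d * (k + 1)) ^ d * ∏ j : Fin d, (s + k * d + ((j : ℕ) + 1)) :=
      shift_weight_prod_le d hs k.cast_nonneg
    _ = _ := by rw [mul_pow]

/-- the weights
`w_{k,α}² = d^d·∏_j (α_j+k+1) / ∏_j (|α|+kd+j)` of the shift decomposition of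
`M_τ` on the Drury–Arveson space satisfy `w_{k,α} ≤ w_{k,0}`. -/
theorem shift_weights_le (d : ℕ) (hd : 1 ≤ d) (k : ℕ) (α : Fin d → ℕ) :
    Real.sqrt ((d : ℝ) ^ d * (∏ j : Fin d, ((α j : ℝ) + k + 1)) /
        ∏ j : Fin d, ((∑ i : Fin d, (α i : ℝ)) + k * d + ((j : ℕ) + 1))) ≤
      Real.sqrt ((d : ℝ) ^ d * ((k : ℝ) + 1) ^ d /
        ∏ j : Fin d, ((k : ℝ) * d + ((j : ℕ) + 1))) :=
  shift_weights_le_general d k α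
end
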